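/- arXiv:0906.5499 — 7 statements merged into one kernel-verified Lean document; each statement's English description precedes it below -/
import Mathlib

section
/- Let f and g be discrete probability distributions on the real line with cumulative distribution functions F and G. For the ground cost c(x,y) = |x-y|, the optimal transportation cost (Monge-Kantorovich cost) between f and g equals the L^1 norm of F - G, i.e., MK_c(f,g) = ∫_ℝ |F(t) - G(t)| dt. -/
/-!
Writing `step a t = 1_{a < t}`, the layer-cake identity `|a - b| = ∫ |step a t - step b t| dt`
turns the cost of any plan `α` into `∫ ∑ α i j |step (x i) t - step (y j) t| dt`, while the
marginal conditions give `F t - G t = ∑ α i j (step (x i) t - step (y j) t)`. The triangle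
inequality therefore bounds `∫ |F - G|` by the cost of every plan. After sorting the atoms, the
monotone (quantile) coupling never moves mass across a level `t` in both directions, so all the
summands have one sign and the bound is attained.
-/

open Finset MeasureTheory

namespace DiscreteTransport

variable {ι κ : Type*} [Fintype ι] [Fintype κ]

noncomputable def step (a t : ℝ) : ℝ := if a < t then 1 else 0

noncomputable def cdf (w x : ι → ℝ) (t : ℝ) : ℝ := ∑ i, if x i < t then w i else 0

def transportCost (α : ι → κ → ℝ) (x : ι → ℝ) (y : κ → ℝ) : ℝ :=
  ∑ i, ∑ j, α i j * |x i - y j|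

def transportCosts (f : ι → ℝ) (g : κ → ℝ) (x : ι → ℝ) (y : κ → ℝ) : Set ℝ :=
  {v | ∃ α : ι → κ → ℝ, (∀ i j, 0 ≤ α i j) ∧ (∀ j, ∑ i, α i j = g j) ∧
    (∀ i, ∑ j, α i j = f i) ∧ v = transportCost α x y}

lemma abs_step_sub_step (a b : ℝ) :
    (fun t => |step a t - step b t|) = (Set.Ioc (min a b) (max a b)).indicator 1 := by
  funext t
  by_cases ha : a < t <;> by_cases hb : b < t <;>
    simp [step, ha, hb, Set.indicator_apply]

lemma integrable_abs_step_sub_step (a b : ℝ) : Integrable (fun t => |step a t - step b t|) := by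
  rw [abs_step_sub_step]
  exact (integrable_indicator_iff measurableSet_Ioc).2 (integrableOn_const measure_Ioc_lt_top.ne)

lemma integral_abs_step_sub_step (a b : ℝ) : ∫ t, |step a t - step b t| = |a - b| := by
  rw [abs_step_sub_step, integral_indicator_one measurableSet_Ioc, Real.volume_real_Ioc,
    max_eq_left (sub_nonneg.2 min_le_max), max_sub_min_eq_abs, abs_sub_comm]

lemma integrable_sum_sum_mul_abs_step_sub_step (α : ι → κ → ℝ) (x : ι → ℝ) (y : κ → ℝ) :
    Integrable (fun t => ∑ i, ∑ j, α i j * |step (x i) t - step (y j) t|) :=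
  integrable_finsetSum _ fun _ _ => integrable_finsetSum _ fun _ _ =>
    (integrable_abs_step_sub_step _ _).const_mul _

lemma transportCost_eq_integral (α : ι → κ → ℝ) (x : ι → ℝ) (y : κ → ℝ) :
    transportCost α x y = ∫ t, ∑ i, ∑ j, α i j * |step (x i) t - step (y j) t| := by
  rw [integral_finsetSum _ fun _ _ => integrable_finsetSum _ fun _ _ =>
    (integrable_abs_step_sub_step _ _).const_mul _]
  refine sum_congr rfl fun i _ => ?_
  rw [integral_finsetSum _ fun _ _ => (integrable_abs_step_sub_step _ _).const_mul _]
  simp only [integral_const_mul, integral_abs_step_sub_step]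


variable {f : ι → ℝ} {g : κ → ℝ} {x : ι → ℝ} {y : κ → ℝ} {α : ι → κ → ℝ}

lemma cdf_eq_sum_sum_mul_step (hrow : ∀ i, ∑ j, α i j = f i) (t : ℝ) :
    cdf f x t = ∑ i, ∑ j, α i j * step (x i) t := by
  refine sum_congr rfl fun i _ => ?_
  rw [← sum_mul, hrow, step, mul_ite, mul_one, mul_zero]

lemma cdf_sub_cdf_eq_sum_sum (hcol : ∀ j, ∑ i, α i j = g j) (hrow : ∀ i, ∑ j, α i j = f i)
    (t : ℝ) :
    cdf f x t - cdf g y t = ∑ i, ∑ j, α i j * (step (x i) t - step (y j) t) := by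
  have hG : cdf g y t = ∑ i, ∑ j, α i j * step (y j) t := by
    rw [sum_comm]
    refine sum_congr rfl fun j _ => ?_
    rw [← sum_mul, hcol, step, mul_ite, mul_one, mul_zero]
  simp only [cdf_eq_sum_sum_mul_step hrow, hG, mul_sub, sum_sub_distrib]

lemma abs_sum_sum_le_sum_sum_abs (a : ι → κ → ℝ) : |∑ i, ∑ j, a i j| ≤ ∑ i, ∑ j, |a i j| :=
  (abs_sum_le_sum_abs _ _).trans (sum_le_sum fun _ _ => abs_sum_le_sum_abs _ _)

lemma abs_sum_sum_eq_sum_sum_abs {a : ι → κ → ℝ}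
    (ha : (∀ i j, 0 ≤ a i j) ∨ (∀ i j, a i j ≤ 0)) : |∑ i, ∑ j, a i j| = ∑ i, ∑ j, |a i j| := by
  have of_nonneg : ∀ b : ι → κ → ℝ, (∀ i j, 0 ≤ b i j) →
      |∑ i, ∑ j, b i j| = ∑ i, ∑ j, |b i j| := fun b hb => by
    rw [abs_of_nonneg (sum_nonneg fun i _ => sum_nonneg fun j _ => hb i j)]
    exact sum_congr rfl fun i _ => sum_congr rfl fun j _ => (abs_of_nonneg (hb i j)).symm
  rcases ha with ha | ha
  · exact of_nonneg a ha
  · simpa only [sum_neg_distrib, abs_neg, Pi.neg_apply] using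
      of_nonneg (-a) fun i j => neg_nonneg.2 (ha i j)

lemma sum_sum_mul_abs_step_sub_step_eq_abs_mul (hα : ∀ i j, 0 ≤ α i j) (t : ℝ) :
    ∑ i, ∑ j, α i j * |step (x i) t - step (y j) t| =
      ∑ i, ∑ j, |α i j * (step (x i) t - step (y j) t)| := by
  simp only [abs_mul, abs_of_nonneg (hα _ _)]

lemma abs_cdf_sub_cdf_le (hα : ∀ i j, 0 ≤ α i j) (hcol : ∀ j, ∑ i, α i j = g j)
    (hrow : ∀ i, ∑ j, α i j = f i) (t : ℝ) :
    |cdf f x t - cdf g y t| ≤ ∑ i, ∑ j, α i j * |step (x i) t - step (y j) t| := by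
  rw [cdf_sub_cdf_eq_sum_sum hcol hrow, sum_sum_mul_abs_step_sub_step_eq_abs_mul hα]
  exact abs_sum_sum_le_sum_sum_abs _

lemma abs_cdf_sub_cdf_eq_of_sign (hα : ∀ i j, 0 ≤ α i j) (hcol : ∀ j, ∑ i, α i j = g j)
    (hrow : ∀ i, ∑ j, α i j = f i) {t : ℝ}
    (hsign : (∀ i j, 0 ≤ α i j * (step (x i) t - step (y j) t)) ∨
      (∀ i j, α i j * (step (x i) t - step (y j) t) ≤ 0)) :
    |cdf f x t - cdf g y t| = ∑ i, ∑ j, α i j * |step (x i) t - step (y j) t| := by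
  rw [cdf_sub_cdf_eq_sum_sum hcol hrow, sum_sum_mul_abs_step_sub_step_eq_abs_mul hα]
  exact abs_sum_sum_eq_sum_sum_abs hsign

lemma integral_abs_cdf_sub_cdf_le (hα : ∀ i j, 0 ≤ α i j) (hcol : ∀ j, ∑ i, α i j = g j)
    (hrow : ∀ i, ∑ j, α i j = f i) :
    ∫ t, |cdf f x t - cdf g y t| ≤ transportCost α x y := by
  rw [transportCost_eq_integral]
  exact integral_mono_of_nonneg (ae_of_all _ fun _ => abs_nonneg _)
    (integrable_sum_sum_mul_abs_step_sub_step α x y)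
    (ae_of_all _ (abs_cdf_sub_cdf_le hα hcol hrow))

lemma step_sub_step_pos_iff {a b t : ℝ} : 0 < step a t - step b t ↔ a < t ∧ ¬b < t := by
  unfold step; split_ifs <;> simp_all

lemma sign_of_monotone_support [LinearOrder ι] [LinearOrder κ] (hα : ∀ i j, 0 ≤ α i j)
    (hsupp : ∀ i i' j j', 0 < α i j → 0 < α i' j' → i < i' → j ≤ j')
    (hx : Monotone x) (hy : Monotone y) (t : ℝ) :
    (∀ i j, 0 ≤ α i j * (step (x i) t - step (y j) t)) ∨
      (∀ i j, α i j * (step (x i) t - step (y j) t) ≤ 0) := by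
  by_contra! h
  obtain ⟨⟨i', j', hneg⟩, ⟨i, j, hpos⟩⟩ := h
  have hd : 0 < step (x i) t - step (y j) t := pos_of_mul_pos_right hpos (hα i j)
  have hd' : 0 < step (y j') t - step (x i') t := by
    linarith [neg_of_mul_neg_right hneg (hα i' j')]
  obtain ⟨hxi, hyj⟩ := step_sub_step_pos_iff.1 hd
  obtain ⟨hyj', hxi'⟩ := step_sub_step_pos_iff.1 hd'
  have hi : i < i' := hx.reflect_lt (hxi.trans_le (not_lt.1 hxi'))
  have hj : j' < j := hy.reflect_lt (hyj'.trans_le (not_lt.1 hyj))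
  have hpos_ij : 0 < α i j := pos_of_mul_pos_left hpos hd.le
  have hpos_ij' : 0 < α i' j' := (hα i' j').lt_of_ne fun h => by simp [← h] at hneg
  exact (hsupp i i' j j' hpos_ij hpos_ij' hi).not_gt hj

lemma max_zero_min_sub_max_eq {a b c d : ℝ} (hab : a ≤ b) (hcd : c ≤ d) :
    max 0 (min b d - max a c) = max a (min b d) - max a (min b c) := by
  simp only [max_def, min_def]
  split_ifs <;> linarith

lemma sum_range_max_zero_min_sub_max {c : ℕ → ℝ} (hc : Monotone c) {a b : ℝ} {n : ℕ}
    (hab : a ≤ b) (ha : c 0 ≤ a) (hb : b ≤ c n) :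
    ∑ k ∈ range n, max 0 (min b (c (k + 1)) - max a (c k)) = b - a := by
  rw [sum_congr rfl fun k _ => max_zero_min_sub_max_eq hab (hc k.le_succ),
    sum_range_sub (fun k => max a (min b (c k))), min_eq_left hb, max_eq_right hab,
    min_eq_right (ha.trans hab), max_eq_left ha]


section Quantile

variable {N M : ℕ}

def cumSum (w : Fin N → ℝ) (n : ℕ) : ℝ := ∑ k ∈ range n, if h : k < N then w ⟨k, h⟩ else 0

lemma cumSum_zero (w : Fin N → ℝ) : cumSum w 0 = 0 := by simp [cumSum]

lemma cumSum_succ (w : Fin N → ℝ) (i : Fin N) : cumSum w (i + 1) = cumSum w i + w i := by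
  simp [cumSum, sum_range_succ]

lemma cumSum_last (w : Fin N → ℝ) : cumSum w N = ∑ i, w i := by
  rw [cumSum, ← Fin.sum_univ_eq_sum_range (fun k => if h : k < N then w ⟨k, h⟩ else 0)]
  simp

lemma monotone_cumSum {w : Fin N → ℝ} (hw : ∀ i, 0 ≤ w i) : Monotone (cumSum w) :=
  monotone_nat_of_le_succ fun n => by
    rw [cumSum, cumSum, sum_range_succ, le_add_iff_nonneg_right]
    split_ifs
    exacts [hw _, le_rfl]

/-- The monotone (quantile) coupling: atoms `i` of `f` and `j` of `g` occupy the quantile ranges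
`[cumSum f i, cumSum f (i + 1)]` and `[cumSum g j, cumSum g (j + 1)]`, and are paired with the
length of their overlap. -/
def quantilePlan (f : Fin N → ℝ) (g : Fin M → ℝ) (i : Fin N) (j : Fin M) : ℝ :=
  max 0 (min (cumSum f (i + 1)) (cumSum g (j + 1)) - max (cumSum f i) (cumSum g j))

variable {f : Fin N → ℝ} {g : Fin M → ℝ}

lemma quantilePlan_nonneg (i : Fin N) (j : Fin M) : 0 ≤ quantilePlan f g i j :=
  le_max_left _ _

lemma quantilePlan_comm (i : Fin N) (j : Fin M) : quantilePlan g f j i = quantilePlan f g i j := by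
  rw [quantilePlan, quantilePlan, min_comm, max_comm (cumSum g j)]

lemma sum_quantilePlan_row (hf : ∀ i, 0 ≤ f i) (hg : ∀ j, 0 ≤ g j) (hfg : ∑ i, f i = ∑ j, g j)
    (i : Fin N) : ∑ j, quantilePlan f g i j = f i := by
  have hle : cumSum f i ≤ cumSum f (i + 1) := monotone_cumSum hf (Nat.le_succ _)
  have h0 : cumSum g 0 ≤ cumSum f i := by
    rw [cumSum_zero, ← cumSum_zero f]
    exact monotone_cumSum hf (Nat.zero_le _)
  have hM : cumSum f (i + 1) ≤ cumSum g M := by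
    rw [cumSum_last, ← hfg, ← cumSum_last]
    exact monotone_cumSum hf i.isLt
  unfold quantilePlan
  rw [Fin.sum_univ_eq_sum_range (fun k =>
      max 0 (min (cumSum f (i + 1)) (cumSum g (k + 1)) - max (cumSum f i) (cumSum g k))),
    sum_range_max_zero_min_sub_max (monotone_cumSum hg) hle h0 hM, cumSum_succ, add_sub_cancel_left]

lemma sum_quantilePlan_col (hf : ∀ i, 0 ≤ f i) (hg : ∀ j, 0 ≤ g j) (hfg : ∑ i, f i = ∑ j, g j)
    (j : Fin M) : ∑ i, quantilePlan f g i j = g j := by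
  simpa only [quantilePlan_comm] using sum_quantilePlan_row hg hf hfg.symm j

lemma quantilePlan_pos_iff {i : Fin N} {j : Fin M} :
    0 < quantilePlan f g i j ↔
      max (cumSum f i) (cumSum g j) < min (cumSum f (i + 1)) (cumSum g (j + 1)) := by
  rw [quantilePlan, lt_max_iff, lt_self_iff_false, false_or, sub_pos]

lemma le_of_quantilePlan_pos (hf : ∀ i, 0 ≤ f i) (hg : ∀ j, 0 ≤ g j) {i i' : Fin N}
    {j j' : Fin M} (h : 0 < quantilePlan f g i j) (h' : 0 < quantilePlan f g i' j')
    (hi : i < i') : j ≤ j' := by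
  by_contra! hj
  have hgf : cumSum g j < cumSum f (i + 1) :=
    (le_max_right _ _).trans_lt ((quantilePlan_pos_iff.1 h).trans_le (min_le_left _ _))
  have hfg : cumSum f i' < cumSum g (j' + 1) :=
    (le_max_left _ _).trans_lt ((quantilePlan_pos_iff.1 h').trans_le (min_le_right _ _))
  have hff : cumSum f (i + 1) ≤ cumSum f i' := monotone_cumSum hf (Nat.succ_le_of_lt hi)
  have hgg : cumSum g (j' + 1) ≤ cumSum g j := monotone_cumSum hg (Nat.succ_le_of_lt hj)
  linarith

theorem isLeast_transportCosts_of_monotone {x : Fin N → ℝ} {y : Fin M → ℝ}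
    (hf : ∀ i, 0 ≤ f i) (hg : ∀ j, 0 ≤ g j) (hfg : ∑ i, f i = ∑ j, g j)
    (hx : Monotone x) (hy : Monotone y) :
    IsLeast (transportCosts f g x y) (∫ t, |cdf f x t - cdf g y t|) := by
  have hcol := sum_quantilePlan_col hf hg hfg
  have hrow := sum_quantilePlan_row hf hg hfg
  refine ⟨⟨quantilePlan f g, quantilePlan_nonneg, hcol, hrow, ?_⟩, ?_⟩
  · rw [transportCost_eq_integral]
    refine integral_congr_ae (ae_of_all _ fun t => ?_)
    exact abs_cdf_sub_cdf_eq_of_sign quantilePlan_nonneg hcol hrow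
      (sign_of_monotone_support quantilePlan_nonneg
        (fun _ _ _ _ => le_of_quantilePlan_pos hf hg) hx hy t)
  · rintro v ⟨α, hα, hcol, hrow, rfl⟩
    exact integral_abs_cdf_sub_cdf_le hα hcol hrow

end Quantile

section Reindex

variable {ι' κ' : Type*} [Fintype ι'] [Fintype κ']

lemma cdf_comp_equiv (σ : ι' ≃ ι) (w x : ι → ℝ) : cdf (w ∘ σ) (x ∘ σ) = cdf w x :=
  funext fun t => Equiv.sum_comp σ fun i => if x i < t then w i else 0

lemma transportCosts_subset_comp_equiv (σ : ι' ≃ ι) (τ : κ' ≃ κ) (f : ι → ℝ) (g : κ → ℝ)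
    (x : ι → ℝ) (y : κ → ℝ) :
    transportCosts f g x y ⊆ transportCosts (f ∘ σ) (g ∘ τ) (x ∘ σ) (y ∘ τ) := by
  rintro v ⟨α, hα, hcol, hrow, rfl⟩
  refine ⟨fun i j => α (σ i) (τ j), fun i j => hα _ _, fun j => ?_, fun i => ?_, ?_⟩
  · exact (Equiv.sum_comp σ fun i => α i (τ j)).trans (hcol _)
  · exact (Equiv.sum_comp τ (α (σ i))).trans (hrow _)
  · rw [transportCost, ← Equiv.sum_comp σ]
    exact sum_congr rfl fun i _ => (Equiv.sum_comp τ fun j => α (σ i) j * |x (σ i) - y j|).symm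

lemma transportCosts_comp_equiv (σ : ι' ≃ ι) (τ : κ' ≃ κ) (f : ι → ℝ) (g : κ → ℝ)
    (x : ι → ℝ) (y : κ → ℝ) :
    transportCosts (f ∘ σ) (g ∘ τ) (x ∘ σ) (y ∘ τ) = transportCosts f g x y := by
  refine (Set.Subset.antisymm ?_ (transportCosts_subset_comp_equiv σ τ f g x y))
  simpa only [Function.comp_assoc, Equiv.self_comp_symm, Function.comp_id] using
    transportCosts_subset_comp_equiv σ.symm τ.symm (f ∘ σ) (g ∘ τ) (x ∘ σ) (y ∘ τ)

end Reindex

end DiscreteTransport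

open DiscreteTransport in
theorem mk_line_eq_l1_of_cdf (N M : ℕ) (f : Fin N → ℝ) (g : Fin M → ℝ)
    (x : Fin N → ℝ) (y : Fin M → ℝ)
    (hf : ∀ i, 0 ≤ f i) (hg : ∀ j, 0 ≤ g j)
    (hf1 : ∑ i, f i = 1) (hg1 : ∑ j, g j = 1) :
    sInf {v : ℝ | ∃ α : Fin N → Fin M → ℝ,
        (∀ i j, 0 ≤ α i j) ∧ (∀ j, ∑ i, α i j = g j) ∧ (∀ i, ∑ j, α i j = f i) ∧
        v = ∑ i, ∑ j, α i j * |x i - y j|} =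
    ∫ t : ℝ, |(∑ i, if x i < t then f i else 0) - (∑ j, if y j < t then g j else 0)| := by
  change sInf (transportCosts f g x y) = ∫ t, |cdf f x t - cdf g y t|
  have hfg : ∑ i, (f ∘ Tuple.sort x) i = ∑ j, (g ∘ Tuple.sort y) j := by
    simp only [Function.comp_apply, Equiv.sum_comp, hf1, hg1]
  have hleast := isLeast_transportCosts_of_monotone (f := f ∘ Tuple.sort x)
    (g := g ∘ Tuple.sort y) (fun i => hf _) (fun j => hg _) hfg
    (Tuple.monotone_sort x) (Tuple.monotone_sort y)
  rw [transportCosts_comp_equiv, cdf_comp_equiv, cdf_comp_equiv] at hleast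
  exact hleast.csInf_eq
end

section
/- Let f and g be discrete probability distributions on the real line with cumulative distribution functions F and G, and let h : ℝ≥0 → ℝ≥0 be increasing and convex. Then the Monge-Kantorovich cost for the ground cost c(x,y) = h(|x-y|) satisfies MK_c(f,g) = ∫_0^1 h(|F^{-1}(t) - G^{-1}(t)|) dt, where F^{-1}(t) = inf{s : F(s) > t} denotes the pseudo-inverse (quantile function). -/
open Finset MeasureTheory

/-!
Sort the atoms and let `F n` be the mass of the first `n` of them. The quantile functions are
then step functions: `F⁻¹ = x i` on the level interval `[F i, F (i+1))`, so the integral is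
the cost of the comonotone plan, which puts mass `|[F i, F (i+1)) ∩ [G j, G (j+1))|` on
`(x i, y j)`.

For `c(x, y) = φ(x - y)` with `φ` convex, the sorted cost matrix is Monge: its mixed differences
`Δc(a, b)` are nonpositive. Summation by parts writes the cost of any plan as a term depending
only on the marginals plus `∑ Δc(a, b) C(a+1, b+1)`, where `C(n, m)` is the mass the plan puts
on the first `n` rows and `m` columns. Since `C(n, m) ≤ min (F n) (G m)`, with equality for the
comonotone plan, the comonotone plan is optimal.
-/

/-- Pseudo-inverse (quantile function) of a nondecreasing function:
`F⁻¹(t) = inf {s : F(s) > t}`. -/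
noncomputable def pseudoInv (F : ℝ → ℝ) (t : ℝ) : ℝ := sInf {s : ℝ | t < F s}

theorem ConvexOn.map_add_map_le_of_add_eq {s : Set ℝ} {φ : ℝ → ℝ} (hφ : ConvexOn ℝ s φ)
    {u v a b : ℝ} (hu : u ∈ s) (hv : v ∈ s) (hua : u ≤ a) (hub : u ≤ b) (hav : a ≤ v)
    (hbv : b ≤ v) (hab : a + b = u + v) : φ a + φ b ≤ φ u + φ v := by
  rcases (hua.trans hav).eq_or_lt with huv | huv
  · obtain rfl : a = u := by linarith
    obtain rfl : b = a := by linarith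
    rw [← huv]
  -- `a` and `b` are the convex combinations of `u` and `v` with swapped weights `λ`, `1 - λ`.
  set lam := (v - a) / (v - u)
  have hvu : 0 < v - u := by linarith
  have hlam : lam * (v - u) = v - a := div_mul_cancel₀ _ hvu.ne'
  have hlam0 : 0 ≤ lam := div_nonneg (by linarith) hvu.le
  have hlam1 : 0 ≤ 1 - lam := by rw [sub_nonneg, div_le_one hvu]; linarith
  have ha := hφ.2 hu hv hlam0 hlam1 (by ring)
  have hb := hφ.2 hu hv hlam1 hlam0 (by ring)
  simp only [smul_eq_mul] at ha hb
  rw [show lam * u + (1 - lam) * v = a by linear_combination -hlam] at ha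
  rw [show (1 - lam) * u + lam * v = b by linear_combination hlam - hab] at hb
  linarith

theorem convexOn_univ_comp_abs {h : ℝ → ℝ} (hconv : ConvexOn ℝ (Set.Ici 0) h)
    (hmono : MonotoneOn h (Set.Ici 0)) : ConvexOn ℝ Set.univ (fun u => h |u|) := by
  have himage : (fun u : ℝ => ‖u‖) '' Set.univ = Set.Ici 0 :=
    Set.ext fun t => ⟨fun ⟨u, _, hu⟩ => hu ▸ norm_nonneg u,
      fun ht => ⟨t, Set.mem_univ t, Real.norm_of_nonneg ht⟩⟩
  simpa [Function.comp_def, Real.norm_eq_abs] using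
    (himage ▸ hconv).comp convexOn_univ_norm (himage ▸ hmono)

theorem min_add_min_le_min_add_min {a b c d : ℝ} (hab : a ≤ b) (hcd : c ≤ d) :
    min a d + min b c ≤ min a c + min b d := by
  simp only [min_def]; split_ifs <;> linarith

section Transport

variable {ι κ ι' κ' : Type*} [Fintype ι] [Fintype κ] [Fintype ι'] [Fintype κ']

def transportPlans (f : ι → ℝ) (g : κ → ℝ) : Set (ι → κ → ℝ) :=
  {α | (∀ i j, 0 ≤ α i j) ∧ (∀ j, ∑ i, α i j = g j) ∧ (∀ i, ∑ j, α i j = f i)}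

def transportCost (c α : ι → κ → ℝ) : ℝ := ∑ i, ∑ j, α i j * c i j

noncomputable def atomicCDF (f x : ι → ℝ) (s : ℝ) : ℝ := ∑ i, if x i < s then f i else 0

variable {f : ι → ℝ} {g : κ → ℝ} {α : ι → κ → ℝ}

theorem transportCost_add (c c' : ι → κ → ℝ) (α : ι → κ → ℝ) :
    transportCost (fun i j => c i j + c' i j) α = transportCost c α + transportCost c' α := by
  simp only [transportCost, mul_add, sum_add_distrib]

theorem transportCost_add_add_sub (hα : α ∈ transportPlans f g) (p : ι → ℝ) (q : κ → ℝ)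
    (r : ℝ) : transportCost (fun i j => p i + q j - r) α =
      ∑ i, f i * p i + ∑ j, g j * q j - (∑ i, f i) * r := by
  obtain ⟨-, hcol, hrow⟩ := hα
  simp only [transportCost, mul_add, mul_sub, sum_add_distrib, sum_sub_distrib, ← sum_mul, hrow]
  rw [sum_comm (f := fun i j => α i j * q j)]
  simp only [← sum_mul, hcol]

theorem transportCost_comp_equiv (σ : ι' ≃ ι) (τ : κ' ≃ κ) (c α : ι → κ → ℝ) :
    transportCost (fun i j => c (σ i) (τ j)) (fun i j => α (σ i) (τ j)) = transportCost c α := by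
  simp only [transportCost]
  rw [σ.sum_comp (fun i => ∑ j, α i (τ j) * c i (τ j))]
  exact sum_congr rfl fun i _ => τ.sum_comp (fun j => α i j * c i j)

theorem comp_equiv_mem_transportPlans_iff (σ : ι' ≃ ι) (τ : κ' ≃ κ) :
    (fun i j => α (σ i) (τ j)) ∈ transportPlans (f ∘ σ) (g ∘ τ) ↔ α ∈ transportPlans f g := by
  simp only [transportPlans, Set.mem_ofPred_eq, Function.comp_apply, τ.sum_comp]
  refine and_congr ?_ (and_congr ?_ ?_)
  · exact σ.forall_congr_left.trans (forall_congr' fun i => τ.forall_congr_left.trans (by simp))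
  · exact τ.forall_congr_left.trans (forall_congr' fun j => by simp [σ.sum_comp (α · j)])
  · exact σ.forall_congr_left.trans (by simp)

theorem image_transportCost_comp_equiv (σ : ι' ≃ ι) (τ : κ' ≃ κ) (c : ι → κ → ℝ) :
    transportCost (fun i j => c (σ i) (τ j)) '' transportPlans (f ∘ σ) (g ∘ τ) =
      transportCost c '' transportPlans f g := by
  ext v
  constructor
  · rintro ⟨β, hβ, rfl⟩
    refine ⟨fun a b => β (σ.symm a) (τ.symm b), (comp_equiv_mem_transportPlans_iff σ τ).1 ?_, ?_⟩
    · simpa using hβ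
    · simpa using (transportCost_comp_equiv σ τ c fun a b => β (σ.symm a) (τ.symm b)).symm
  · rintro ⟨α, hα, rfl⟩
    exact ⟨_, (comp_equiv_mem_transportPlans_iff σ τ).2 hα, transportCost_comp_equiv ..⟩

theorem atomicCDF_comp_equiv (σ : ι' ≃ ι) (f x : ι → ℝ) :
    atomicCDF (f ∘ σ) (x ∘ σ) = atomicCDF f x :=
  funext fun s => σ.sum_comp fun i => if x i < s then f i else 0

end Transport

section Comonotone

variable {N M : ℕ}

def cumMass (f : Fin N → ℝ) (n : ℕ) : ℝ := ∑ i : Fin N, if (i : ℕ) < n then f i else 0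

def cornerMass (α : Fin N → Fin M → ℝ) (n m : ℕ) : ℝ :=
  ∑ i : Fin N, ∑ j : Fin M, if (i : ℕ) < n ∧ (j : ℕ) < m then α i j else 0

def mixedDiff (ψ : ℕ → ℕ → ℝ) (a b : ℕ) : ℝ :=
  ψ (a + 1) (b + 1) - ψ a (b + 1) - ψ (a + 1) b + ψ a b

/-- `min (F n) (G m)` is the joint distribution function of the comonotone coupling
(the Fréchet–Hoeffding upper bound); the plan is its mixed difference. -/
def comonotonePlan (f : Fin N → ℝ) (g : Fin M → ℝ) : Fin N → Fin M → ℝ :=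
  fun i j => mixedDiff (fun n m => min (cumMass f n) (cumMass g m)) i j

theorem sum_fin_ite_lt_eq_sum_range {R : Type*} [AddCommMonoid R] (v : ℕ → R) {n : ℕ}
    (hn : n ≤ N) :
    ∑ i : Fin N, (if (i : ℕ) < n then v i else 0) = ∑ i ∈ range n, v i := by
  rw [Fin.sum_univ_eq_sum_range (fun i => if i < n then v i else 0), ← sum_filter]
  congr 1
  ext i
  simp only [Finset.mem_filter, Finset.mem_range]
  omega

theorem mixedDiff_flip (ψ : ℕ → ℕ → ℝ) (a b : ℕ) : mixedDiff (flip ψ) b a = mixedDiff ψ a b := by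
  simp only [mixedDiff, flip]; ring

theorem sum_range_mixedDiff (ψ : ℕ → ℕ → ℝ) (a m : ℕ) :
    ∑ b ∈ range m, mixedDiff ψ a b = (ψ (a + 1) m - ψ (a + 1) 0) - (ψ a m - ψ a 0) := by
  rw [show ψ (a + 1) m - ψ (a + 1) 0 - (ψ a m - ψ a 0) = (ψ (a + 1) m - ψ a m) - (ψ (a + 1) 0 - ψ a 0)
    by ring, ← sum_range_sub (fun b => ψ (a + 1) b - ψ a b)]
  exact sum_congr rfl fun b _ => by simp only [mixedDiff]; ring

theorem sum_range_sum_range_mixedDiff (ψ : ℕ → ℕ → ℝ) (n m : ℕ) :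
    ∑ a ∈ range n, ∑ b ∈ range m, mixedDiff ψ a b = ψ n m - ψ 0 m - ψ n 0 + ψ 0 0 := by
  simp only [sum_range_mixedDiff]
  rw [sum_range_sub (fun a => ψ a m - ψ a 0)]
  ring

theorem sum_range_sum_range_ite_le_mixedDiff (ψ : ℕ → ℕ → ℝ) {i j L K : ℕ} (hi : i ≤ L)
    (hj : j ≤ K) :
    ∑ a ∈ range L, ∑ b ∈ range K, (if i ≤ a ∧ j ≤ b then mixedDiff ψ a b else 0) =
      ψ L K - ψ i K - ψ L j + ψ i j := by
  have hIco : ∀ k n, (range n).filter (k ≤ ·) = Finset.Ico k n := fun k n => by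
    ext; simp only [Finset.mem_filter, Finset.mem_range, Finset.mem_Ico]; omega
  simp only [ite_and, sum_ite_irrel, sum_const_zero, ← sum_filter, hIco, sum_Ico_eq_sum_range]
  have hshift := sum_range_sum_range_mixedDiff (fun a b => ψ (i + a) (j + b)) (L - i) (K - j)
  rw [add_zero, add_zero, Nat.add_sub_cancel' hi, Nat.add_sub_cancel' hj] at hshift
  exact hshift

variable (f : Fin N → ℝ) (g : Fin M → ℝ)

@[simp] theorem cumMass_zero : cumMass f 0 = 0 := by simp [cumMass]

theorem cumMass_of_le {n : ℕ} (hn : N ≤ n) : cumMass f n = ∑ i, f i :=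
  sum_congr rfl fun i _ => if_pos (i.isLt.trans_le hn)

theorem cumMass_succ {n : ℕ} (hn : n < N) : cumMass f (n + 1) = cumMass f n + f ⟨n, hn⟩ := by
  have hsplit (i : Fin N) : (if (i : ℕ) < n + 1 then f i else 0) =
      (if (i : ℕ) < n then f i else 0) + if i = ⟨n, hn⟩ then f i else 0 := by
    simp only [Fin.ext_iff]
    split_ifs <;> first | ring1 | (exfalso; omega)
  simp only [cumMass, hsplit, sum_add_distrib, sum_ite_eq', mem_univ, if_true]

variable {f g}

theorem cumMass_mono (hf : ∀ i, 0 ≤ f i) : Monotone (cumMass f) := fun n m hnm =>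
  sum_le_sum fun i _ => by
    split_ifs with h₁ h₂ <;> first | exact le_rfl | exact hf i | omega

theorem cumMass_nonneg (hf : ∀ i, 0 ≤ f i) (n : ℕ) : 0 ≤ cumMass f n :=
  cumMass_zero f ▸ cumMass_mono hf n.zero_le

theorem cumMass_le_one (hf : ∀ i, 0 ≤ f i) (hf1 : ∑ i, f i = 1) (n : ℕ) : cumMass f n ≤ 1 :=
  calc cumMass f n ≤ cumMass f (max n N) := cumMass_mono hf (le_max_left n N)
    _ = 1 := by rw [cumMass_of_le f (le_max_right n N), hf1]

theorem cornerMass_le_cumMass_left {α : Fin N → Fin M → ℝ} (hα : α ∈ transportPlans f g)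
    (n m : ℕ) : cornerMass α n m ≤ cumMass f n := by
  obtain ⟨hα0, -, hrow⟩ := hα
  refine sum_le_sum fun i _ => ?_
  split_ifs with hi
  · rw [← hrow i]
    exact sum_le_sum fun j _ => by split_ifs <;> simp [hα0]
  · simp [hi]

theorem cornerMass_le_cumMass_right {α : Fin N → Fin M → ℝ} (hα : α ∈ transportPlans f g)
    (n m : ℕ) : cornerMass α n m ≤ cumMass g m := by
  obtain ⟨hα0, hcol, -⟩ := hα
  rw [cornerMass, sum_comm]
  refine sum_le_sum fun j _ => ?_
  split_ifs with hj
  · rw [← hcol j]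
    exact sum_le_sum fun i _ => by split_ifs <;> simp [hα0]
  · simp [hj]

theorem cornerMass_eq_sum_range (u : ℕ → ℕ → ℝ) {n m : ℕ} (hn : n ≤ N) (hm : m ≤ M) :
    cornerMass (fun (i : Fin N) (j : Fin M) => u i j) n m = ∑ a ∈ range n, ∑ b ∈ range m, u a b := by
  simp only [cornerMass, ite_and, sum_ite_irrel, sum_const_zero]
  rw [sum_fin_ite_lt_eq_sum_range (fun a => ∑ j : Fin M, if (j : ℕ) < m then u a j else 0) hn]
  exact sum_congr rfl fun a _ => sum_fin_ite_lt_eq_sum_range _ hm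

theorem comonotonePlan_nonneg (hf : ∀ i, 0 ≤ f i) (hg : ∀ j, 0 ≤ g j) (i : Fin N) (j : Fin M) :
    0 ≤ comonotonePlan f g i j := by
  have := min_add_min_le_min_add_min (cumMass_mono hf (Nat.le_succ i))
    (cumMass_mono hg (Nat.le_succ j))
  simp only [comonotonePlan, mixedDiff]
  linarith

theorem comonotonePlan_swap (i : Fin N) (j : Fin M) :
    comonotonePlan g f j i = comonotonePlan f g i j := by
  simp only [comonotonePlan, ← mixedDiff_flip _ (i : ℕ) j]
  congr 1
  funext m n
  exact min_comm _ _

theorem sum_comonotonePlan_right (hf : ∀ i, 0 ≤ f i) (hf1 : ∑ i, f i = 1) (hg1 : ∑ j, g j = 1)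
    (i : Fin N) : ∑ j, comonotonePlan f g i j = f i := by
  unfold comonotonePlan
  rw [Fin.sum_univ_eq_sum_range (mixedDiff _ i), sum_range_mixedDiff,
    cumMass_of_le g le_rfl, hg1, cumMass_zero, min_eq_left (cumMass_le_one hf hf1 _),
    min_eq_left (cumMass_le_one hf hf1 _), min_eq_right (cumMass_nonneg hf _),
    min_eq_right (cumMass_nonneg hf _), cumMass_succ f i.isLt]
  ring

theorem comonotonePlan_mem_transportPlans (hf : ∀ i, 0 ≤ f i) (hg : ∀ j, 0 ≤ g j)
    (hf1 : ∑ i, f i = 1) (hg1 : ∑ j, g j = 1) : comonotonePlan f g ∈ transportPlans f g := by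
  refine ⟨comonotonePlan_nonneg hf hg, fun j => ?_, sum_comonotonePlan_right hf hf1 hg1⟩
  exact (sum_congr rfl fun i _ => (comonotonePlan_swap i j).symm).trans
    (sum_comonotonePlan_right hg hg1 hf1 j)

theorem cornerMass_comonotonePlan (hf : ∀ i, 0 ≤ f i) (hg : ∀ j, 0 ≤ g j) {n m : ℕ}
    (hn : n ≤ N) (hm : m ≤ M) :
    cornerMass (comonotonePlan f g) n m = min (cumMass f n) (cumMass g m) := by
  unfold comonotonePlan
  rw [cornerMass_eq_sum_range _ hn hm, sum_range_sum_range_mixedDiff]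
  simp [min_eq_left (cumMass_nonneg hg _), min_eq_right (cumMass_nonneg hf _)]

end Comonotone

section Monge

variable {N M : ℕ} {f : Fin N → ℝ} {g : Fin M → ℝ}

theorem transportCost_eq_add_sum_mixedDiff_mul_cornerMass (c : ℕ → ℕ → ℝ)
    {α : Fin N → Fin M → ℝ} (hα : α ∈ transportPlans f g) :
    transportCost (fun (i : Fin N) (j : Fin M) => c i j) α =
      ∑ i, f i * c i (M - 1) + ∑ j, g j * c (N - 1) j - (∑ i, f i) * c (N - 1) (M - 1) +
        ∑ a ∈ range (N - 1), ∑ b ∈ range (M - 1),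
          mixedDiff c a b * cornerMass α (a + 1) (b + 1) := by
  have hc (i : Fin N) (j : Fin M) : c i j = (c i (M - 1) + c (N - 1) j - c (N - 1) (M - 1)) +
      ∑ a ∈ range (N - 1), ∑ b ∈ range (M - 1),
        if (i : ℕ) ≤ a ∧ (j : ℕ) ≤ b then mixedDiff c a b else 0 := by
    rw [sum_range_sum_range_ite_le_mixedDiff c (by omega) (by omega)]
    ring
  simp only [hc]
  rw [transportCost_add, transportCost_add_add_sub hα]
  congr 1
  simp only [transportCost, cornerMass, mul_sum]
  simp_rw [sum_comm (s := (univ : Finset (Fin M))) (t := range (N - 1)),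
    sum_comm (s := (univ : Finset (Fin M))) (t := range (M - 1)),
    sum_comm (s := (univ : Finset (Fin N))) (t := range (N - 1)),
    sum_comm (s := (univ : Finset (Fin N))) (t := range (M - 1))]
  refine sum_congr rfl fun a _ => sum_congr rfl fun b _ => sum_congr rfl fun i _ =>
    sum_congr rfl fun j _ => ?_
  simp only [Nat.lt_succ_iff, mul_ite, mul_zero]
  split_ifs <;> ring

theorem mixedDiff_comp_sub_nonpos {φ : ℝ → ℝ} (hφ : ConvexOn ℝ Set.univ φ) {p q : ℕ → ℝ}
    {a b : ℕ} (hp : p a ≤ p (a + 1)) (hq : q b ≤ q (b + 1)) :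
    mixedDiff (fun n m => φ (p n - q m)) a b ≤ 0 := by
  have := hφ.map_add_map_le_of_add_eq (Set.mem_univ (p a - q (b + 1)))
    (Set.mem_univ (p (a + 1) - q b)) (a := p a - q b) (b := p (a + 1) - q (b + 1))
    (by linarith) (by linarith) (by linarith) (by linarith) (by ring)
  simp only [mixedDiff]
  linarith

theorem transportCost_comonotonePlan_le (c : ℕ → ℕ → ℝ)
    (hc : ∀ a b, a + 1 < N → b + 1 < M → mixedDiff c a b ≤ 0) (hf : ∀ i, 0 ≤ f i)
    (hg : ∀ j, 0 ≤ g j) (hf1 : ∑ i, f i = 1) (hg1 : ∑ j, g j = 1) {α : Fin N → Fin M → ℝ}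
    (hα : α ∈ transportPlans f g) :
    transportCost (fun (i : Fin N) (j : Fin M) => c i j) (comonotonePlan f g) ≤
      transportCost (fun (i : Fin N) (j : Fin M) => c i j) α := by
  rw [transportCost_eq_add_sum_mixedDiff_mul_cornerMass c hα,
    transportCost_eq_add_sum_mixedDiff_mul_cornerMass c
      (comonotonePlan_mem_transportPlans hf hg hf1 hg1)]
  apply add_le_add_right
  refine sum_le_sum fun a ha => sum_le_sum fun b hb => ?_
  rw [mem_range] at ha hb
  rw [cornerMass_comonotonePlan hf hg (by omega) (by omega)]
  exact mul_le_mul_of_nonpos_left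
    (le_min (cornerMass_le_cumMass_left hα _ _) (cornerMass_le_cumMass_right hα _ _))
    (hc a b (by omega) (by omega))

theorem isLeast_transportCost_comonotonePlan {φ : ℝ → ℝ} (hφ : ConvexOn ℝ Set.univ φ)
    {x : Fin N → ℝ} {y : Fin M → ℝ} (hx : Monotone x) (hy : Monotone y) (hf : ∀ i, 0 ≤ f i)
    (hg : ∀ j, 0 ≤ g j) (hf1 : ∑ i, f i = 1) (hg1 : ∑ j, g j = 1) :
    IsLeast (transportCost (fun i j => φ (x i - y j)) '' transportPlans f g)
      (transportCost (fun i j => φ (x i - y j)) (comonotonePlan f g)) := by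
  refine ⟨⟨_, comonotonePlan_mem_transportPlans hf hg hf1 hg1, rfl⟩, ?_⟩
  rintro _ ⟨α, hα, rfl⟩
  set p : ℕ → ℝ := fun n => if h : n < N then x ⟨n, h⟩ else 0
  set q : ℕ → ℝ := fun m => if h : m < M then y ⟨m, h⟩ else 0
  have hp (a : ℕ) (ha : a + 1 < N) : p a ≤ p (a + 1) := by
    simp only [p, dif_pos ha, dif_pos (a.lt_succ_self.trans ha)]
    exact hx (Fin.mk_le_mk.2 a.le_succ)
  have hq (b : ℕ) (hb : b + 1 < M) : q b ≤ q (b + 1) := by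
    simp only [q, dif_pos hb, dif_pos (b.lt_succ_self.trans hb)]
    exact hy (Fin.mk_le_mk.2 b.le_succ)
  have hcost : (fun i j => φ (x i - y j)) = fun (i : Fin N) (j : Fin M) => φ (p i - q j) := by
    funext i j
    simp [p, q]
  rw [hcost]
  exact transportCost_comonotonePlan_le (fun n m => φ (p n - q m))
    (fun a b ha hb => mixedDiff_comp_sub_nonpos hφ (hp a ha) (hq b hb)) hf hg hf1 hg1 hα

end Monge

theorem max_min_sub_max_eq {a b c d : ℝ} (hab : a ≤ b) (hcd : c ≤ d) :
    max (min b d - max a c) 0 = min b d - min a d - min b c + min a c := by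
  simp only [min_def, max_def]; split_ifs <;> linarith

section Quantile

variable {N M : ℕ} {f x : Fin N → ℝ} {g y : Fin M → ℝ}

def atomInterval (f : Fin N → ℝ) (i : Fin N) : Set ℝ :=
  Set.Ico (cumMass f i) (cumMass f (i + 1))

theorem atomicCDF_le_cumMass (hx : Monotone x) (hf : ∀ i, 0 ≤ f i) {i : Fin N} {s : ℝ}
    (hs : s ≤ x i) : atomicCDF f x s ≤ cumMass f i :=
  sum_le_sum fun k _ => by
    split_ifs with hks hki
    · exact le_rfl
    · exact absurd (hx (not_lt.1 hki : i ≤ k)) (by linarith)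
    · exact hf k
    · exact le_rfl

theorem cumMass_succ_le_atomicCDF (hx : Monotone x) (hf : ∀ i, 0 ≤ f i) {i : Fin N} {s : ℝ}
    (hs : x i < s) : cumMass f (i + 1) ≤ atomicCDF f x s :=
  sum_le_sum fun k _ => by
    split_ifs with hki hks
    · exact le_rfl
    · exact absurd (hx (Nat.lt_succ_iff.1 hki : k ≤ i)) (by linarith)
    · exact hf k
    · exact le_rfl

theorem pseudoInv_atomicCDF_of_mem_atomInterval (hx : Monotone x) (hf : ∀ i, 0 ≤ f i)
    {i : Fin N} {t : ℝ} (ht : t ∈ atomInterval f i) : pseudoInv (atomicCDF f x) t = x i := by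
  have hlevel : {s | t < atomicCDF f x s} = Set.Ioi (x i) := by
    ext s
    simp only [Set.mem_ofPred_eq, Set.mem_Ioi]
    refine ⟨fun hs => not_le.1 fun h => ?_, fun hs => ?_⟩
    · exact (hs.trans_le (atomicCDF_le_cumMass hx hf h)).not_ge ht.1
    · exact ht.2.trans_le (cumMass_succ_le_atomicCDF hx hf hs)
  rw [pseudoInv, hlevel, csInf_Ioi]

theorem existsUnique_mem_atomInterval (hf : ∀ i, 0 ≤ f i) (hf1 : ∑ i, f i = 1) {t : ℝ}
    (ht : t ∈ Set.Ico (0 : ℝ) 1) : ∃! i, t ∈ atomInterval f i := by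
  classical
  have hex : ∃ n, t < cumMass f n := ⟨N, by rw [cumMass_of_le f le_rfl, hf1]; exact ht.2⟩
  obtain ⟨k, hk⟩ : ∃ k, Nat.find hex = k + 1 :=
    Nat.exists_eq_succ_of_ne_zero fun h => (Nat.find_spec hex).not_ge (by simpa [h] using ht.1)
  have hkt : cumMass f k ≤ t := not_lt.1 (Nat.find_min hex (by omega))
  have hkN : k < N := not_le.1 fun h => by
    rw [cumMass_of_le f h, hf1] at hkt
    exact hkt.not_gt ht.2
  refine ⟨⟨k, hkN⟩, ⟨hkt, hk ▸ Nat.find_spec hex⟩, fun i hi => Fin.ext ?_⟩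
  by_contra hne
  rcases Nat.lt_or_gt_of_ne hne with hlt | hlt
  · exact (hi.2.trans_le (cumMass_mono hf hlt)).not_ge hkt
  · exact ((hk ▸ Nat.find_spec hex).trans_le (cumMass_mono hf hlt)).not_ge hi.1

theorem atomInterval_subset_Ico (hf : ∀ i, 0 ≤ f i) (hf1 : ∑ i, f i = 1) (i : Fin N) :
    atomInterval f i ⊆ Set.Ico 0 1 := fun _ ht =>
  ⟨(cumMass_nonneg hf _).trans ht.1, ht.2.trans_le (cumMass_le_one hf hf1 _)⟩

theorem volume_real_atomInterval_inter (hf : ∀ i, 0 ≤ f i) (hg : ∀ j, 0 ≤ g j) (i : Fin N)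
    (j : Fin M) : volume.real (atomInterval f i ∩ atomInterval g j) = comonotonePlan f g i j := by
  rw [atomInterval, atomInterval, Set.Ico_inter_Ico, Real.volume_real_Ico,
    max_min_sub_max_eq (cumMass_mono hf (Nat.le_succ i)) (cumMass_mono hg (Nat.le_succ j))]
  rfl

theorem integral_pseudoInv_eq_transportCost (Φ : ℝ → ℝ → ℝ) (hx : Monotone x)
    (hy : Monotone y) (hf : ∀ i, 0 ≤ f i) (hg : ∀ j, 0 ≤ g j) (hf1 : ∑ i, f i = 1)
    (hg1 : ∑ j, g j = 1) :
    ∫ t in (0 : ℝ)..1, Φ (pseudoInv (atomicCDF f x) t) (pseudoInv (atomicCDF g y) t) =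
      transportCost (fun i j => Φ (x i) (y j)) (comonotonePlan f g) := by
  have hpt : ∀ t ∈ Set.Ico (0 : ℝ) 1,
      Φ (pseudoInv (atomicCDF f x) t) (pseudoInv (atomicCDF g y) t) =
        ∑ i, ∑ j, (atomInterval f i ∩ atomInterval g j).indicator (fun _ => Φ (x i) (y j)) t := by
    classical
    intro t ht
    obtain ⟨i₀, hi₀, hi₀u⟩ := existsUnique_mem_atomInterval hf hf1 ht
    obtain ⟨j₀, hj₀, hj₀u⟩ := existsUnique_mem_atomInterval hg hg1 ht
    have hmem (i : Fin N) (j : Fin M) :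
        t ∈ atomInterval f i ∩ atomInterval g j ↔ i = i₀ ∧ j = j₀ :=
      ⟨fun h => ⟨hi₀u i h.1, hj₀u j h.2⟩, by rintro ⟨rfl, rfl⟩; exact ⟨hi₀, hj₀⟩⟩
    simp [Set.indicator_apply, hmem, ite_and, pseudoInv_atomicCDF_of_mem_atomInterval hx hf hi₀,
      pseudoInv_atomicCDF_of_mem_atomInterval hy hg hj₀]
  have hmeas (i : Fin N) (j : Fin M) : MeasurableSet (atomInterval f i ∩ atomInterval g j) :=
    measurableSet_Ico.inter measurableSet_Ico
  have hint (i : Fin N) (j : Fin M) : IntegrableOn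
      ((atomInterval f i ∩ atomInterval g j).indicator fun _ => Φ (x i) (y j)) (Set.Ico 0 1) :=
    (integrableOn_const (by simp)).indicator (hmeas i j)
  rw [intervalIntegral.integral_of_le zero_le_one, integral_Ioc_eq_integral_Ioo,
    ← integral_Ico_eq_integral_Ioo, setIntegral_congr_fun measurableSet_Ico hpt,
    integral_finsetSum _ fun i _ => integrable_finsetSum _ fun j _ => hint i j]
  refine sum_congr rfl fun i _ => ?_
  rw [integral_finsetSum _ fun j _ => hint i j]
  refine sum_congr rfl fun j _ => ?_
  rw [setIntegral_indicator (hmeas i j), setIntegral_const,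
    Set.inter_eq_right.2 (Set.inter_subset_left.trans (atomInterval_subset_Ico hf hf1 i)),
    volume_real_atomInterval_inter hf hg, smul_eq_mul, mul_comm]

end Quantile

theorem sInf_transportCost_eq_integral {N M : ℕ} {φ : ℝ → ℝ} (hφ : ConvexOn ℝ Set.univ φ)
    (f : Fin N → ℝ) (g : Fin M → ℝ) (x : Fin N → ℝ) (y : Fin M → ℝ) (hf : ∀ i, 0 ≤ f i)
    (hg : ∀ j, 0 ≤ g j) (hf1 : ∑ i, f i = 1) (hg1 : ∑ j, g j = 1) :
    sInf (transportCost (fun i j => φ (x i - y j)) '' transportPlans f g) =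
      ∫ t in (0 : ℝ)..1, φ (pseudoInv (atomicCDF f x) t - pseudoInv (atomicCDF g y) t) := by
  set σ := Tuple.sort x
  set τ := Tuple.sort y
  rw [← image_transportCost_comp_equiv σ τ, ← atomicCDF_comp_equiv σ f x,
    ← atomicCDF_comp_equiv τ g y]
  have hfσ : ∑ i, (f ∘ σ) i = 1 := (Equiv.sum_comp σ f).trans hf1
  have hgτ : ∑ j, (g ∘ τ) j = 1 := (Equiv.sum_comp τ g).trans hg1
  exact (isLeast_transportCost_comonotonePlan hφ (Tuple.monotone_sort x) (Tuple.monotone_sort y)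
    (fun i => hf (σ i)) (fun j => hg (τ j)) hfσ hgτ).csInf_eq.trans
    (integral_pseudoInv_eq_transportCost (fun a b => φ (a - b)) (Tuple.monotone_sort x)
      (Tuple.monotone_sort y) (fun i => hf (σ i)) (fun j => hg (τ j)) hfσ hgτ).symm

theorem mk_line_convex_eq_quantile_integral_general (N M : ℕ)
    (f : Fin N → ℝ) (g : Fin M → ℝ) (x : Fin N → ℝ) (y : Fin M → ℝ)
    (hf : ∀ i, 0 ≤ f i) (hg : ∀ j, 0 ≤ g j)
    (hf1 : ∑ i, f i = 1) (hg1 : ∑ j, g j = 1)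
    (h : ℝ → ℝ) (hconv : ConvexOn ℝ (Set.Ici 0) h)
    (hmono : MonotoneOn h (Set.Ici 0)) :
    sInf {v : ℝ | ∃ α : Fin N → Fin M → ℝ,
        (∀ i j, 0 ≤ α i j) ∧ (∀ j, ∑ i, α i j = g j) ∧ (∀ i, ∑ j, α i j = f i) ∧
        v = ∑ i, ∑ j, α i j * h |x i - y j|} =
    ∫ t in (0:ℝ)..1,
      h |pseudoInv (fun s => ∑ i, if x i < s then f i else 0) t -
         pseudoInv (fun s => ∑ j, if y j < s then g j else 0) t| := by
  have hcosts : {v : ℝ | ∃ α : Fin N → Fin M → ℝ,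
        (∀ i j, 0 ≤ α i j) ∧ (∀ j, ∑ i, α i j = g j) ∧ (∀ i, ∑ j, α i j = f i) ∧
        v = ∑ i, ∑ j, α i j * h |x i - y j|} =
      transportCost (fun i j => h |x i - y j|) '' transportPlans f g :=
    Set.ext fun _ => ⟨fun ⟨α, h0, hcol, hrow, hv⟩ => ⟨α, ⟨h0, hcol, hrow⟩, hv.symm⟩,
      fun ⟨α, ⟨h0, hcol, hrow⟩, hv⟩ => ⟨α, h0, hcol, hrow, hv.symm⟩⟩
  rw [hcosts]
  exact sInf_transportCost_eq_integral (convexOn_univ_comp_abs hconv hmono) f g x y hf hg hf1 hg1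

theorem mk_line_convex_eq_quantile_integral (N M : ℕ)
    (f : Fin N → ℝ) (g : Fin M → ℝ) (x : Fin N → ℝ) (y : Fin M → ℝ)
    (hf : ∀ i, 0 ≤ f i) (hg : ∀ j, 0 ≤ g j)
    (hf1 : ∑ i, f i = 1) (hg1 : ∑ j, g j = 1)
    (h : ℝ → ℝ) (hconv : ConvexOn ℝ (Set.Ici 0) h)
    (hmono : MonotoneOn h (Set.Ici 0)) (hnn : ∀ t ∈ Set.Ici (0 : ℝ), 0 ≤ h t) :
    sInf {v : ℝ | ∃ α : Fin N → Fin M → ℝ,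
        (∀ i j, 0 ≤ α i j) ∧ (∀ j, ∑ i, α i j = g j) ∧ (∀ i, ∑ j, α i j = f i) ∧
        v = ∑ i, ∑ j, α i j * h |x i - y j|} =
    ∫ t in (0:ℝ)..1,
      h |pseudoInv (fun s => ∑ i, if x i < s then f i else 0) t -
         pseudoInv (fun s => ∑ j, if y j < s then g j else 0) t| :=
  mk_line_convex_eq_quantile_integral_general N M f g x y hf hg hf1 hg1 h hconv hmono
end

section
/- Let f and g be discrete probability histograms on N circular bins, with cumulative histograms F and G, and for each k ∈ {0,...,N-1} define F_k[i] = F[i] - F[k] if i ≥ k and F[i] - F[k] + 1 if i < k (and similarly G_k). Then inf_{α ∈ ℝ} Σ_{i=0}^{N-1} |F[i] - G[i] - α| = min_{k ∈ {0,...,N-1}} Σ_{i=0}^{N-1} |F_k[i] - G_k[i]|, i.e., the two definitions of the circular Earth Mover's Distance coincide. -/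
open Finset

/-- Cumulative histogram `F[i] = ∑_{k ≤ i} f[k]`. -/
def cumHist {N : ℕ} (f : Fin N → ℝ) (i : Fin N) : ℝ := ∑ k, if k ≤ i then f k else 0

/-- Cumulative histogram starting at bin `k`:
`F_k[i] = F[i] - F[k]` if `i ≥ k` and `F[i] - F[k] + 1` if `i < k`. -/
def cumHistFrom {N : ℕ} (f : Fin N → ℝ) (k i : Fin N) : ℝ :=
  if k ≤ i then cumHist f i - cumHist f k else cumHist f i - cumHist f k + 1

lemma exists_median {N : ℕ} (hN : 0 < N) (D : Fin N → ℝ) (α : ℝ) :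
    ∃ k, ∑ i, |D i - D k| ≤ ∑ i, |D i - α| := by
  classical
  set A := Finset.univ.filter (fun i => D i ≤ α) with hA
  set B := Finset.univ.filter (fun i => ¬ D i ≤ α) with hB
  have hcard : A.card + B.card = N := by
    rw [hA, hB, Finset.card_filter_add_card_filter_not, Finset.card_univ,
      Fintype.card_fin]
  have hsplit : ∀ (φ : Fin N → ℝ), ∑ i, φ i = ∑ i ∈ A, φ i + ∑ i ∈ B, φ i :=
    fun φ => (Finset.sum_filter_add_sum_filter_not _ _ _).symm
  by_cases hc : B.card ≤ A.card
  · have hAne : A.Nonempty := by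
      rw [← Finset.card_pos]; omega
    obtain ⟨k, hk, hmax⟩ := A.exists_max_image D hAne
    have hkα : D k ≤ α := (Finset.mem_filter.mp hk).2
    refine ⟨k, ?_⟩
    rw [hsplit (fun i => |D i - D k|), hsplit (fun i => |D i - α|)]
    have h1 : ∑ i ∈ A, |D i - D k| = ∑ i ∈ A, |D i - α| - A.card * (α - D k) := by
      have : ∀ i ∈ A, |D i - D k| = |D i - α| - (α - D k) := by
        intro i hi
        have h1 : D i ≤ D k := hmax i hi
        have h2 : D i ≤ α := (Finset.mem_filter.mp hi).2
        rw [abs_of_nonpos (by linarith), abs_of_nonpos (by linarith)]; ring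
      rw [Finset.sum_congr rfl this, Finset.sum_sub_distrib, Finset.sum_const,
        nsmul_eq_mul]
    have h2 : ∑ i ∈ B, |D i - D k| = ∑ i ∈ B, |D i - α| + B.card * (α - D k) := by
      have : ∀ i ∈ B, |D i - D k| = |D i - α| + (α - D k) := by
        intro i hi
        have h2 : ¬ D i ≤ α := (Finset.mem_filter.mp hi).2
        rw [abs_of_nonneg (by linarith), abs_of_nonneg (by linarith)]; ring
      rw [Finset.sum_congr rfl this, Finset.sum_add_distrib, Finset.sum_const,
        nsmul_eq_mul]
    have hcR : (B.card : ℝ) ≤ A.card := by exact_mod_cast hc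
    have hδ : 0 ≤ α - D k := by linarith
    nlinarith [mul_nonneg (sub_nonneg.mpr hcR) hδ]
  · have hBne : B.Nonempty := by
      rw [← Finset.card_pos]; omega
    obtain ⟨k, hk, hmin⟩ := B.exists_min_image D hBne
    have hkα : ¬ D k ≤ α := (Finset.mem_filter.mp hk).2
    refine ⟨k, ?_⟩
    rw [hsplit (fun i => |D i - D k|), hsplit (fun i => |D i - α|)]
    have h1 : ∑ i ∈ A, |D i - D k| = ∑ i ∈ A, |D i - α| + A.card * (D k - α) := by
      have : ∀ i ∈ A, |D i - D k| = |D i - α| + (D k - α) := by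
        intro i hi
        have h2 : D i ≤ α := (Finset.mem_filter.mp hi).2
        rw [abs_of_nonpos (by linarith), abs_of_nonpos (by linarith)]; ring
      rw [Finset.sum_congr rfl this, Finset.sum_add_distrib, Finset.sum_const,
        nsmul_eq_mul]
    have h2 : ∑ i ∈ B, |D i - D k| = ∑ i ∈ B, |D i - α| - B.card * (D k - α) := by
      have : ∀ i ∈ B, |D i - D k| = |D i - α| - (D k - α) := by
        intro i hi
        have h1 : D k ≤ D i := hmin i hi
        have h2 : ¬ D i ≤ α := (Finset.mem_filter.mp hi).2
        rw [abs_of_nonneg (by linarith), abs_of_nonneg (by linarith)]; ring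
      rw [Finset.sum_congr rfl this, Finset.sum_sub_distrib, Finset.sum_const,
        nsmul_eq_mul]
    have hcR : (A.card : ℝ) ≤ B.card := by
      have : A.card ≤ B.card := by omega
      exact_mod_cast this
    have hδ : 0 ≤ D k - α := by linarith
    nlinarith [mul_nonneg (sub_nonneg.mpr hcR) hδ]

theorem cemd_two_definitions_coincide (N : ℕ) (hN : 0 < N) (f g : Fin N → ℝ)
    (hf : ∀ i, 0 ≤ f i) (hg : ∀ i, 0 ≤ g i)
    (hf1 : ∑ i, f i = 1) (hg1 : ∑ i, g i = 1) :
    (⨅ α : ℝ, ∑ i, |cumHist f i - cumHist g i - α|) =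
      ⨅ k : Fin N, ∑ i, |cumHistFrom f k i - cumHistFrom g k i| := by
  have hD : ∀ k i : Fin N, cumHistFrom f k i - cumHistFrom g k i =
      (cumHist f i - cumHist g i) - (cumHist f k - cumHist g k) := by
    intro k i; unfold cumHistFrom; split <;> ring
  set D : Fin N → ℝ := fun i => cumHist f i - cumHist g i with hDdef
  simp_rw [hD]
  haveI : Nonempty (Fin N) := ⟨⟨0, hN⟩⟩
  have hbdd : BddBelow (Set.range fun α : ℝ => ∑ i, |D i - α|) := by
    refine ⟨0, ?_⟩
    rintro x ⟨α, rfl⟩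
    positivity
  apply le_antisymm
  · apply le_ciInf
    intro k
    exact ciInf_le hbdd (D k)
  · apply le_ciInf
    intro α
    obtain ⟨k, hk⟩ := exists_median hN D α
    exact le_trans (ciInf_le ((Set.finite_range _).bddBelow) k) hk
end

section
/- Let c(x,y) = h(d(x,y)) with h strictly convex and increasing and d the geodesic circle distance. Let x_1,...,x_P and y_1,...,y_P be points of the circle, all pairwise distinct, and let σ be a permutation minimizing Σ_k c(x_k, y_{σ(k)}). If for two indices l ≠ k the open geodesic paths γ(x_l, y_{σ(l)}) and γ(x_k, y_{σ(k)}) intersect (with x_l ≠ x_k and y_{σ(l)} ≠ y_{σ(k)}), then the two paths have the same orientation (both positive or both negative) and neither path is contained in the other. -/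
open Finset

/-- Geodesic distance on the circle `ℝ/ℤ` (perimeter 1), points represented by reals. -/
noncomputable def circDist (x y : ℝ) : ℝ := min (Int.fract (y - x)) (Int.fract (x - y))

/-- The geodesic arc `γ(x,y)` is *positive* if it runs counterclockwise from `x` to `y`
(antipodal pairs are assigned the counterclockwise arc). -/
def posPath (x y : ℝ) : Prop := Int.fract (y - x) ≤ 1 / 2

/-- `z` belongs to the *open* geodesic arc `γ(x,y)` from `x` to `y` on the circle `ℝ/ℤ`
(the counterclockwise arc being chosen when `x` and `y` are antipodal). -/
def inArc (x y z : ℝ) : Prop :=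
  (Int.fract (y - x) ≤ 1 / 2 ∧
    0 < Int.fract (z - x) ∧ Int.fract (z - x) < Int.fract (y - x)) ∨
  (1 / 2 < Int.fract (y - x) ∧
    0 < Int.fract (z - y) ∧ Int.fract (z - y) < Int.fract (x - y))

/-!
Optimality of `σ` means that exchanging the partners of `x l` and `x k` never lowers the cost;
in both forbidden configurations it does.

If the two paths have opposite orientations, both are counterclockwise arcs through the common
point `z`, one starting at `x l`, the other at `y (σ k)`. With `p`, `q` the counterclockwise
distances from these starts to `z` and `ℓ₁`, `ℓ₂` the arc lengths, the exchanged distances are at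
most `|p - q|` and `|(ℓ₂ - q) - (ℓ₁ - p)|`: a pair with strictly smaller sum than `(ℓ₁, ℓ₂)` and
no larger maximum, so a convex increasing cost strictly decreases.

If an arc of length `ℓ₁` lies inside an arc of length `ℓ₂` of the same orientation, at offset
`u > 0` from its start, the exchanged distances are at most `ℓ₂ - u` and `u + ℓ₁`; these lie
strictly between `ℓ₁` and `ℓ₂` and have the same sum, and strict convexity applies.
-/

section Convexity

variable {s : Set ℝ} {f : ℝ → ℝ}

theorem StrictConvexOn.strictMonoOn_of_monotoneOn (hf : StrictConvexOn ℝ s f)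
    (hf' : MonotoneOn f s) : StrictMonoOn f s := by
  intro a ha b hb hab
  have hmid : (1 / 2 : ℝ) • a + (1 / 2 : ℝ) • b ∈ s :=
    hf.1 ha hb (by norm_num) (by norm_num) (by norm_num)
  have hlt := hf.2 ha hb hab.ne (by norm_num : (0 : ℝ) < 1 / 2) (by norm_num : (0 : ℝ) < 1 / 2)
    (by norm_num)
  have hle := hf' ha hmid (by simp only [smul_eq_mul]; linarith)
  simp only [smul_eq_mul] at hlt hle
  linarith

theorem StrictConvexOn.add_lt_add_of_lt_of_lt (hf : StrictConvexOn ℝ s f) {a b c d : ℝ}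
    (hc : c ∈ s) (hd : d ∈ s) (hca : c < a) (hcb : c < b) (habcd : a + b = c + d) :
    f a + f b < f c + f d := by
  have hcd : c < d := by linarith
  have hdc : 0 < d - c := by linarith
  have chord : ∀ t, c < t → t < d → f t * (d - c) < (d - t) * f c + (t - c) * f d := by
    intro t hct htd
    have key := hf.2 hc hd hcd.ne (div_pos (by linarith) hdc : 0 < (d - t) / (d - c))
      (div_pos (by linarith) hdc : 0 < (t - c) / (d - c)) (by field_simp; ring)
    have ht : ((d - t) / (d - c)) • c + ((t - c) / (d - c)) • d = t := by
      simp only [smul_eq_mul]; field_simp; ring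
    rw [ht, smul_eq_mul, smul_eq_mul] at key
    calc f t * (d - c) < ((d - t) / (d - c) * f c + (t - c) / (d - c) * f d) * (d - c) :=
          mul_lt_mul_of_pos_right key hdc
      _ = (d - t) * f c + (t - c) * f d := by field_simp
  have hsum : (f a + f b) * (d - c) < (f c + f d) * (d - c) := by
    have hb : b = c + d - a := by linarith
    have := add_lt_add (chord a hca (by linarith)) (chord b hcb (by linarith))
    rw [hb] at this ⊢
    linarith
  exact lt_of_mul_lt_mul_right hsum hdc.le

theorem StrictConvexOn.add_le_add_of_le_of_le (hf : StrictConvexOn ℝ s f) {a b c d : ℝ}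
    (hc : c ∈ s) (hd : d ∈ s) (hca : c ≤ a) (hcb : c ≤ b) (habcd : a + b = c + d) :
    f a + f b ≤ f c + f d := by
  rcases hca.eq_or_lt with rfl | hca
  · rw [add_left_cancel habcd]
  rcases hcb.eq_or_lt with rfl | hcb
  · rw [show a = d by linarith, add_comm]
  exact (hf.add_lt_add_of_lt_of_lt hc hd hca hcb habcd).le

/-- Strict form of the weak-majorization inequality for a convex increasing function. -/
theorem StrictConvexOn.add_lt_add_of_le_max (hf : StrictConvexOn ℝ (Set.Ici 0) f)
    (hf' : MonotoneOn f (Set.Ici 0)) {a b c d : ℝ} (ha : 0 ≤ a) (hb : 0 ≤ b) (hc : 0 ≤ c)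
    (hd : 0 ≤ d) (hac : a ≤ max c d) (hbc : b ≤ max c d) (habcd : a + b < c + d) :
    f a + f b < f c + f d := by
  wlog hcd : c ≤ d generalizing c d
  · rw [add_comm (f c)]
    exact this hd hc (max_comm c d ▸ hac) (max_comm c d ▸ hbc) (by linarith) (by linarith)
  rw [max_eq_right hcd] at hac hbc
  have hmono := hf.strictMonoOn_of_monotoneOn hf'
  -- `(m, a + b - m)` has the sum of `(a, b)` and is more spread out, yet lies below `(c, d)`.
  set m := max 0 (a + b - d)
  have hm0 : 0 ≤ m := le_max_left _ _
  have hma : m ≤ a := max_le ha (by linarith)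
  have hmb : m ≤ b := max_le hb (by linarith)
  have hmc : m ≤ c := max_le hc (by linarith)
  have hmd : a + b - m ≤ d := by linarith [le_max_right 0 (a + b - d)]
  have spread : f a + f b ≤ f m + f (a + b - m) :=
    hf.add_le_add_of_le_of_le hm0 (by simp only [Set.mem_Ici]; linarith) hma hmb (by ring)
  rcases hmc.lt_or_eq with hmc | rfl
  · have := hmono hm0 hc hmc
    have := hf' (by simp only [Set.mem_Ici]; linarith) hd hmd
    linarith
  · have := hmono (by simp only [Set.mem_Ici]; linarith) hd (by linarith : a + b - m < d)
    linarith

end Convexity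

theorem circDist_comm (a b : ℝ) : circDist a b = circDist b a := min_comm _ _

theorem circDist_nonneg (a b : ℝ) : 0 ≤ circDist a b :=
  le_min (Int.fract_nonneg _) (Int.fract_nonneg _)

theorem circDist_le_abs_of_sub_eq {a b t : ℝ} (n : ℤ) (h : b - a = t + n) :
    circDist a b ≤ |t| := by
  have hba : Int.fract (b - a) = Int.fract t := by rw [h, Int.fract_add_intCast]
  have hab : Int.fract (a - b) = Int.fract (-t) := by
    rw [show a - b = -t + ((-n : ℤ) : ℝ) by push_cast; linarith, Int.fract_add_intCast]
  have fract_le : ∀ r : ℝ, 0 ≤ r → Int.fract r ≤ r := fun r hr => by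
    rw [← Int.self_sub_floor]
    linarith [(Int.cast_nonneg (R := ℝ) (Int.floor_nonneg.2 hr))]
  rcases le_total 0 t with ht | ht
  · calc circDist a b ≤ Int.fract (b - a) := min_le_left _ _
      _ ≤ |t| := by rw [hba, abs_of_nonneg ht]; exact fract_le t ht
  · calc circDist a b ≤ Int.fract (a - b) := min_le_right _ _
      _ ≤ |t| := by rw [hab, abs_of_nonpos ht]; exact fract_le _ (neg_nonneg.2 ht)

theorem circDist_eq_of_posPath {a b : ℝ} (h : posPath a b) :
    circDist a b = Int.fract (b - a) := by
  refine min_eq_left ?_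
  rcases eq_or_ne (Int.fract (b - a)) 0 with h0 | h0
  · rw [h0]; exact Int.fract_nonneg _
  · rw [← neg_sub b a, Int.fract_neg h0]; unfold posPath at h; linarith

theorem circDist_eq_of_not_posPath {a b : ℝ} (h : ¬ posPath a b) :
    circDist a b = Int.fract (a - b) := by
  unfold posPath at h
  have h0 : Int.fract (b - a) ≠ 0 := by intro h0; rw [h0] at h; norm_num at h
  rw [circDist, ← neg_sub b a, Int.fract_neg h0]
  exact min_eq_right (by linarith)

theorem Int.fract_sub_ne_zero {a b : ℝ} (ha : a ∈ Set.Ico 0 1) (hb : b ∈ Set.Ico 0 1)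
    (hab : a ≠ b) : Int.fract (a - b) ≠ 0 := by
  intro h0
  obtain ⟨n, hn⟩ := Int.fract_eq_zero_iff.1 h0
  have := Int.fract_eq_fract.2 ⟨n, hn.symm⟩
  rw [Int.fract_eq_self.2 ha, Int.fract_eq_self.2 hb] at this
  exact hab this

def InCcwArc (a b z : ℝ) : Prop :=
  0 < Int.fract (z - a) ∧ Int.fract (z - a) < Int.fract (b - a)

theorem inArc_iff_of_posPath {a b z : ℝ} (h : posPath a b) : inArc a b z ↔ InCcwArc a b z := by
  unfold inArc InCcwArc
  unfold posPath at h
  constructor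
  · rintro (⟨-, hz⟩ | ⟨h', -⟩)
    · exact hz
    · linarith
  · exact fun hz => Or.inl ⟨h, hz⟩

theorem inArc_iff_of_not_posPath {a b z : ℝ} (h : ¬ posPath a b) :
    inArc a b z ↔ InCcwArc b a z := by
  unfold inArc InCcwArc
  unfold posPath at h
  constructor
  · rintro (⟨h', -⟩ | ⟨-, hz⟩)
    · exact absurd h' h
    · exact hz
  · exact fun hz => Or.inr ⟨not_le.1 h, hz⟩

theorem add_le_of_forall_fract_add_lt {u ℓ₁ ℓ₂ : ℝ} (hu₀ : 0 ≤ u) (hu₁ : u < 1) (hℓ₁ : 0 < ℓ₁)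
    (hℓ₂ : ℓ₂ < 1) (H : ∀ t, 0 < t → t < ℓ₁ → Int.fract (u + t) < ℓ₂) : u + ℓ₁ ≤ ℓ₂ := by
  have hu : u < ℓ₂ := by
    set t := min ℓ₁ (1 - u) / 2 with ht
    have ht₀ : 0 < t := by positivity
    have ht₁ : t < ℓ₁ := by linarith [min_le_left ℓ₁ (1 - u)]
    have ht₂ : u + t < 1 := by linarith [min_le_right ℓ₁ (1 - u)]
    have := H t ht₀ ht₁
    rw [Int.fract_eq_self.2 ⟨by linarith, ht₂⟩] at this
    linarith
  by_contra! hlt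
  have := H (ℓ₂ - u) (by linarith) (by linarith)
  rw [add_sub_cancel, Int.fract_eq_self.2 ⟨by linarith, hℓ₂⟩] at this
  exact lt_irrefl _ this

section Rematching

variable {h : ℝ → ℝ}

theorem rematch_lt_of_inCcwArc_of_inCcwArc (hconv : StrictConvexOn ℝ (Set.Ici 0) h)
    (hmono : MonotoneOn h (Set.Ici 0)) {s₁ e₁ s₂ e₂ z : ℝ} (hz₁ : InCcwArc s₁ e₁ z)
    (hz₂ : InCcwArc s₂ e₂ z) :
    h (circDist s₁ s₂) + h (circDist e₁ e₂) <
      h (Int.fract (e₁ - s₁)) + h (Int.fract (e₂ - s₂)) := by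
  obtain ⟨hp₀, hp⟩ := hz₁
  obtain ⟨hq₀, hq⟩ := hz₂
  set p := Int.fract (z - s₁)
  set q := Int.fract (z - s₂)
  set ℓ₁ := Int.fract (e₁ - s₁)
  set ℓ₂ := Int.fract (e₂ - s₂)
  have hs : circDist s₁ s₂ ≤ |p - q| :=
    circDist_le_abs_of_sub_eq (⌊z - s₁⌋ - ⌊z - s₂⌋)
      (by simp only [p, q, ← Int.self_sub_floor]; push_cast; ring)
  have he : circDist e₁ e₂ ≤ |(ℓ₂ - q) - (ℓ₁ - p)| :=
    circDist_le_abs_of_sub_eq (⌊e₂ - s₂⌋ - ⌊e₁ - s₁⌋ + ⌊z - s₁⌋ - ⌊z - s₂⌋)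
      (by simp only [p, q, ℓ₁, ℓ₂, ← Int.self_sub_floor]; push_cast; ring)
  have hs' : |p - q| < p + q := abs_sub_lt_iff.2 ⟨by linarith, by linarith⟩
  have he' : |(ℓ₂ - q) - (ℓ₁ - p)| < (ℓ₂ - q) + (ℓ₁ - p) :=
    abs_sub_lt_iff.2 ⟨by linarith, by linarith⟩
  refine hconv.add_lt_add_of_le_max hmono (circDist_nonneg _ _) (circDist_nonneg _ _)
    (Int.fract_nonneg _) (Int.fract_nonneg _) ?_ ?_ (by linarith)
  · refine hs.trans (abs_sub_le_iff.2 ⟨?_, ?_⟩) <;>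
      linarith [le_max_left ℓ₁ ℓ₂, le_max_right ℓ₁ ℓ₂]
  · refine he.trans (abs_sub_le_iff.2 ⟨?_, ?_⟩) <;>
      linarith [le_max_left ℓ₁ ℓ₂, le_max_right ℓ₁ ℓ₂]

theorem rematch_lt_of_inCcwArc_subset (hconv : StrictConvexOn ℝ (Set.Ici 0) h)
    (hmono : MonotoneOn h (Set.Ici 0)) {s₁ e₁ s₂ e₂ : ℝ} (hs : Int.fract (s₁ - s₂) ≠ 0)
    (he : Int.fract (e₁ - e₂) ≠ 0) (hse : Int.fract (e₁ - s₁) ≠ 0)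
    (hsub : ∀ z, InCcwArc s₁ e₁ z → InCcwArc s₂ e₂ z) :
    h (circDist s₁ e₂) + h (circDist s₂ e₁) <
      h (Int.fract (e₁ - s₁)) + h (Int.fract (e₂ - s₂)) := by
  set u := Int.fract (s₁ - s₂)
  set ℓ₁ := Int.fract (e₁ - s₁)
  set ℓ₂ := Int.fract (e₂ - s₂)
  have hu : 0 < u := (Int.fract_nonneg _).lt_of_ne' hs
  have hℓ₁ : 0 < ℓ₁ := (Int.fract_nonneg _).lt_of_ne' hse
  have hle : u + ℓ₁ ≤ ℓ₂ := by
    refine add_le_of_forall_fract_add_lt hu.le (Int.fract_lt_one _) hℓ₁ (Int.fract_lt_one _)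
      fun t ht₀ htℓ => ?_
    have ht : Int.fract (s₁ + t - s₁) = t := by
      rw [add_sub_cancel_left, Int.fract_eq_self]
      exact ⟨ht₀.le, htℓ.trans (Int.fract_lt_one _)⟩
    have hmem := (hsub (s₁ + t) ⟨ht.symm ▸ ht₀, ht.symm ▸ htℓ⟩).2
    rwa [show s₁ + t - s₂ = u + t + ⌊s₁ - s₂⌋ by simp only [u, ← Int.self_sub_floor]; ring,
      Int.fract_add_intCast] at hmem
  have hlt : u + ℓ₁ < ℓ₂ := by
    refine hle.lt_of_ne fun heq => he ?_
    rw [show e₁ - e₂ = (u + ℓ₁ - ℓ₂) + (⌊s₁ - s₂⌋ + ⌊e₁ - s₁⌋ - ⌊e₂ - s₂⌋ : ℤ) by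
        simp only [u, ℓ₁, ℓ₂, ← Int.self_sub_floor]; push_cast; ring,
      Int.fract_add_intCast, heq, sub_self, Int.fract_zero]
  have hd₁ : circDist s₁ e₂ ≤ ℓ₂ - u := by
    refine (circDist_le_abs_of_sub_eq (⌊e₂ - s₂⌋ - ⌊s₁ - s₂⌋) ?_).trans_eq
      (abs_of_pos (by linarith))
    simp only [u, ℓ₂, ← Int.self_sub_floor]; push_cast; ring
  have hd₂ : circDist s₂ e₁ ≤ u + ℓ₁ := by
    refine (circDist_le_abs_of_sub_eq (⌊s₁ - s₂⌋ + ⌊e₁ - s₁⌋) ?_).trans_eq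
      (abs_of_pos (by linarith))
    simp only [u, ℓ₁, ← Int.self_sub_floor]; push_cast; ring
  calc h (circDist s₁ e₂) + h (circDist s₂ e₁) ≤ h (ℓ₂ - u) + h (u + ℓ₁) :=
        add_le_add (hmono (circDist_nonneg _ _) (by simp only [Set.mem_Ici]; linarith) hd₁)
          (hmono (circDist_nonneg _ _) (by simp only [Set.mem_Ici]; linarith) hd₂)
    _ < h ℓ₁ + h ℓ₂ :=
        hconv.add_lt_add_of_lt_of_lt hℓ₁.le (Int.fract_nonneg (e₂ - s₂)) (by linarith)
          (by linarith) (by ring)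

theorem swap_lt_of_posPath_of_not_posPath (hconv : StrictConvexOn ℝ (Set.Ici 0) h)
    (hmono : MonotoneOn h (Set.Ici 0)) {a₁ b₁ a₂ b₂ z : ℝ} (hp₁ : posPath a₁ b₁)
    (hp₂ : ¬ posPath a₂ b₂) (hz₁ : inArc a₁ b₁ z) (hz₂ : inArc a₂ b₂ z) :
    h (circDist a₁ b₂) + h (circDist a₂ b₁) < h (circDist a₁ b₁) + h (circDist a₂ b₂) := by
  rw [circDist_eq_of_posPath hp₁, circDist_eq_of_not_posPath hp₂, circDist_comm a₂]
  exact rematch_lt_of_inCcwArc_of_inCcwArc hconv hmono ((inArc_iff_of_posPath hp₁).1 hz₁)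
    ((inArc_iff_of_not_posPath hp₂).1 hz₂)

theorem swap_lt_of_arc_subset (hconv : StrictConvexOn ℝ (Set.Ici 0) h)
    (hmono : MonotoneOn h (Set.Ici 0)) {a₁ b₁ a₂ b₂ : ℝ} (ha₁ : a₁ ∈ Set.Ico 0 1)
    (hb₁ : b₁ ∈ Set.Ico 0 1) (ha₂ : a₂ ∈ Set.Ico 0 1) (hb₂ : b₂ ∈ Set.Ico 0 1)
    (hab₁ : a₁ ≠ b₁) (ha : a₁ ≠ a₂) (hb : b₁ ≠ b₂) (hp : posPath a₁ b₁ ↔ posPath a₂ b₂)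
    (hsub : {z : ℝ | inArc a₁ b₁ z} ⊆ {z : ℝ | inArc a₂ b₂ z}) :
    h (circDist a₁ b₂) + h (circDist a₂ b₁) < h (circDist a₁ b₁) + h (circDist a₂ b₂) := by
  by_cases hp₁ : posPath a₁ b₁
  · have hp₂ := hp.1 hp₁
    rw [circDist_eq_of_posPath hp₁, circDist_eq_of_posPath hp₂]
    exact rematch_lt_of_inCcwArc_subset hconv hmono (Int.fract_sub_ne_zero ha₁ ha₂ ha)
      (Int.fract_sub_ne_zero hb₁ hb₂ hb) (Int.fract_sub_ne_zero hb₁ ha₁ hab₁.symm)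
      fun z hz => (inArc_iff_of_posPath hp₂).1 (hsub ((inArc_iff_of_posPath hp₁).2 hz))
  · have hp₂ : ¬ posPath a₂ b₂ := mt hp.2 hp₁
    rw [circDist_eq_of_not_posPath hp₁, circDist_eq_of_not_posPath hp₂, circDist_comm a₁,
      circDist_comm a₂, add_comm]
    exact rematch_lt_of_inCcwArc_subset hconv hmono (Int.fract_sub_ne_zero hb₁ hb₂ hb)
      (Int.fract_sub_ne_zero ha₁ ha₂ ha) (Int.fract_sub_ne_zero ha₁ hb₁ hab₁)
      fun z hz => (inArc_iff_of_not_posPath hp₂).1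
        (hsub ((inArc_iff_of_not_posPath hp₁).2 hz))

end Rematching

theorem Equiv.Perm.add_le_add_of_forall_sum_le {ι M : Type*} [Fintype ι] [DecidableEq ι]
    [AddCommGroup M] [PartialOrder M] [IsOrderedAddMonoid M] (c : ι → ι → M)
    {σ : Equiv.Perm ι} (hσ : ∀ τ : Equiv.Perm ι, ∑ i, c i (σ i) ≤ ∑ i, c i (τ i)) (i j : ι) :
    c i (σ i) + c j (σ j) ≤ c i (σ j) + c j (σ i) := by
  rcases eq_or_ne i j with rfl | hij
  · exact le_rfl
  have key := hσ ((Equiv.swap i j).trans σ)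
  rw [← sub_nonneg, ← Finset.sum_sub_distrib, Fintype.sum_eq_add i j hij] at key
  · simp only [Equiv.trans_apply, Equiv.swap_apply_left, Equiv.swap_apply_right] at key
    rw [← sub_nonneg]
    convert key using 1
    abel
  · rintro m ⟨hmi, hmj⟩
    rw [Equiv.trans_apply, Equiv.swap_apply_of_ne_of_ne hmi hmj, sub_self]

theorem optimal_paths_same_orientation_no_nesting (P : ℕ)
    (h : ℝ → ℝ) (hconv : StrictConvexOn ℝ (Set.Ici 0) h)
    (hmono : MonotoneOn h (Set.Ici 0))
    (x y : Fin P → ℝ)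
    (hx : ∀ k, x k ∈ Set.Ico (0:ℝ) 1) (hy : ∀ k, y k ∈ Set.Ico (0:ℝ) 1)
    (hxinj : ∀ k l, k ≠ l → x k ≠ x l) (hyinj : ∀ k l, k ≠ l → y k ≠ y l)
    (hxy : ∀ k l, x k ≠ y l)
    (σ : Equiv.Perm (Fin P))
    (hopt : ∀ τ : Equiv.Perm (Fin P),
      ∑ k, h (circDist (x k) (y (σ k))) ≤ ∑ k, h (circDist (x k) (y (τ k))))
    (l k : Fin P) (hlk : l ≠ k)
    (hinter : ∃ z : ℝ, inArc (x l) (y (σ l)) z ∧ inArc (x k) (y (σ k)) z) :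
    (posPath (x l) (y (σ l)) ↔ posPath (x k) (y (σ k))) ∧
    ¬ ({z : ℝ | inArc (x l) (y (σ l)) z} ⊆ {z : ℝ | inArc (x k) (y (σ k)) z}) ∧
    ¬ ({z : ℝ | inArc (x k) (y (σ k)) z} ⊆ {z : ℝ | inArc (x l) (y (σ l)) z}) := by
  obtain ⟨z, hzl, hzk⟩ := hinter
  have no_better_swap : ∀ i j, ¬ h (circDist (x i) (y (σ j))) + h (circDist (x j) (y (σ i))) <
      h (circDist (x i) (y (σ i))) + h (circDist (x j) (y (σ j))) := fun i j =>
    not_lt.2 <|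
      Equiv.Perm.add_le_add_of_forall_sum_le (fun i j => h (circDist (x i) (y j))) hopt i j
  have horient : posPath (x l) (y (σ l)) ↔ posPath (x k) (y (σ k)) :=
    ⟨fun hl => by_contra fun hk =>
        no_better_swap l k (swap_lt_of_posPath_of_not_posPath hconv hmono hl hk hzl hzk),
      fun hk => by_contra fun hl =>
        no_better_swap k l (swap_lt_of_posPath_of_not_posPath hconv hmono hk hl hzk hzl)⟩
  have hσ : σ l ≠ σ k := σ.injective.ne hlk
  refine ⟨horient, fun hsub => no_better_swap l k ?_, fun hsub => no_better_swap k l ?_⟩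
  · exact swap_lt_of_arc_subset hconv hmono (hx l) (hy _) (hx k) (hy _) (hxy l _)
      (hxinj l k hlk) (hyinj _ _ hσ) horient hsub
  · exact swap_lt_of_arc_subset hconv hmono (hx k) (hy _) (hx l) (hy _) (hxy k _)
      (hxinj k l hlk.symm) (hyinj _ _ hσ.symm) horient.symm hsub
end

section
/- Let h be strictly convex and increasing, c(x,y) = h(d(x,y)) with d the geodesic circle distance, and let x_1,...,x_P, y_1,...,y_P be pairwise distinct points on the circle. Then for every permutation σ minimizing Σ_k c(x_k, y_{σ(k)}), there exists an index k ∈ {1,...,P} such that for all l ≠ k, the point x_k does not belong to the open geodesic path γ(x_l, y_{σ(l)}). -/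
open Finset

lemma circDist_nonneg_s10 (x y : ℝ) : 0 ≤ circDist x y :=
  le_min (Int.fract_nonneg _) (Int.fract_nonneg _)

lemma fract_sub_fract (a b : ℝ) :
    Int.fract (a - b) = Int.fract (Int.fract a - Int.fract b) := by
  rw [Int.fract_eq_fract]
  exact ⟨⌊a⌋ - ⌊b⌋, by unfold Int.fract; push_cast; ring⟩

/-- A point strictly inside the arc from `x` to `y` is strictly closer to `y` than `x` is. -/
lemma arc_lt {x y z : ℝ} (hz : inArc x y z) : circDist z y < circDist x y := by
  unfold circDist
  rcases hz with ⟨h1, hg0, hgf⟩ | ⟨h1, h2, h3⟩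
  · set f := Int.fract (y - x) with hf
    set g := Int.fract (z - x) with hg
    have hf0 : 0 < f := lt_trans hg0 hgf
    have hg1 : g < 1 := Int.fract_lt_one _
    have hf1 : f < 1 := Int.fract_lt_one _
    have hyz : Int.fract (y - z) = f - g := by
      have hd : y - z = (y - x) - (z - x) := by ring
      rw [hd, fract_sub_fract, ← hf, ← hg]
      exact Int.fract_eq_self.mpr ⟨by linarith, by linarith⟩
    have hxy : Int.fract (x - y) = 1 - f := by
      have hd : x - y = -(y - x) := by ring
      rw [hd, Int.fract_neg (by rw [← hf]; exact ne_of_gt hf0)]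
    calc min (Int.fract (y - z)) (Int.fract (z - y)) ≤ Int.fract (y - z) := min_le_left _ _
      _ = f - g := hyz
      _ < f := by linarith
      _ ≤ min f (Int.fract (x - y)) := le_min le_rfl (by rw [hxy]; linarith)
  · set f := Int.fract (y - x) with hf
    have hxy : Int.fract (x - y) = 1 - f := by
      have hd : x - y = -(y - x) := by ring
      rw [hd, Int.fract_neg (by rw [← hf]; positivity)]
    calc min (Int.fract (y - z)) (Int.fract (z - y)) ≤ Int.fract (z - y) := min_le_right _ _
      _ < Int.fract (x - y) := h3
      _ ≤ min f (Int.fract (x - y)) := le_min (by rw [hxy]; linarith) le_rfl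

lemma strictMonoOn_of_strictConvexOn {h : ℝ → ℝ}
    (hconv : StrictConvexOn ℝ (Set.Ici 0) h)
    (hmono : MonotoneOn h (Set.Ici 0)) : StrictMonoOn h (Set.Ici 0) := by
  intro a ha b hb hab
  by_contra hle
  push_neg at hle
  have ha' : (0:ℝ) ≤ a := ha
  have hb' : (0:ℝ) ≤ b := hb
  have hmid : (1/2 : ℝ) • a + (1/2 : ℝ) • b ∈ Set.Ici (0:ℝ) := by
    simp only [smul_eq_mul, Set.mem_Ici]; linarith
  have h1 := hconv.2 ha hb hab.ne (by norm_num : (0:ℝ) < 1/2)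
    (by norm_num : (0:ℝ) < 1/2) (by norm_num)
  have h2 : h a ≤ h ((1/2 : ℝ) • a + (1/2 : ℝ) • b) := by
    apply hmono ha hmid
    simp only [smul_eq_mul]; linarith
  simp only [smul_eq_mul] at h1 h2
  linarith [hmono ha hb hab.le]

theorem exists_point_outside_all_optimal_paths (P : ℕ)
    (h : ℝ → ℝ) (hconv : StrictConvexOn ℝ (Set.Ici 0) h)
    (hmono : MonotoneOn h (Set.Ici 0))
    (x y : Fin P → ℝ)
    (hx : ∀ k, x k ∈ Set.Ico (0:ℝ) 1) (hy : ∀ k, y k ∈ Set.Ico (0:ℝ) 1)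
    (hxinj : ∀ k l, k ≠ l → x k ≠ x l) (hyinj : ∀ k l, k ≠ l → y k ≠ y l)
    (hxy : ∀ k l, x k ≠ y l)
    (hP : 0 < P)
    (σ : Equiv.Perm (Fin P))
    (hopt : ∀ τ : Equiv.Perm (Fin P),
      ∑ k, h (circDist (x k) (y (σ k))) ≤ ∑ k, h (circDist (x k) (y (τ k)))) :
    ∃ k : Fin P, ∀ l : Fin P, l ≠ k → ¬ inArc (x l) (y (σ l)) (x k) := by
  classical
  by_contra hcon
  push_neg at hcon
  choose f hfne hfarc using hcon
  have hsm := strictMonoOn_of_strictConvexOn hconv hmono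
  have key : ∀ a, circDist (x a) (y (σ (f a))) < circDist (x (f a)) (y (σ (f a))) :=
    fun a => arc_lt (hfarc a)
  -- find a periodic point
  set k0 : Fin P := ⟨0, hP⟩ with hk0
  obtain ⟨i, j, hij, heq⟩ : ∃ i j : ℕ, i < j ∧ f^[i] k0 = f^[j] k0 := by
    obtain ⟨a, b, hab, hmap⟩ := Finite.exists_ne_map_eq_of_infinite (fun n : ℕ => f^[n] k0)
    rcases hab.lt_or_gt with h' | h'
    · exact ⟨a, b, h', hmap⟩
    · exact ⟨b, a, h', hmap.symm⟩
  set k : Fin P := f^[i] k0 with hk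
  set m : ℕ := j - i with hmdef
  have hm : 0 < m := Nat.sub_pos_of_lt hij
  have hper : f^[m] k = k := by
    rw [hk, ← Function.iterate_add_apply]
    have hmi : m + i = j := Nat.sub_add_cancel hij.le
    rw [hmi, ← heq]
  have cancel : ∀ t : ℕ, f^[m - 1] (f (f^[t] k)) = f^[t] k := by
    intro t
    have e1 : f^[m - 1] (f (f^[t] k)) = f^[(m - 1) + (1 + t)] k := by
      rw [Function.iterate_add_apply, Function.iterate_add_apply, Function.iterate_one]
    have e2 : (m - 1) + (1 + t) = t + m := by omega
    rw [e1, e2, Function.iterate_add_apply, hper]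
  set S : Set (Fin P) := {a | ∃ t : ℕ, f^[t] k = a} with hS
  have hkS : k ∈ S := ⟨0, rfl⟩
  have hfS : ∀ a ∈ S, f a ∈ S := by
    rintro a ⟨t, rfl⟩
    exact ⟨t + 1, (Function.iterate_succ_apply' f t k)⟩
  have finj : ∀ a ∈ S, ∀ b ∈ S, f a = f b → a = b := by
    rintro a ⟨ta, rfl⟩ b ⟨tb, rfl⟩ hfab
    rw [← cancel ta, hfab, cancel tb]
  set g : Fin P → Fin P := fun a => if a ∈ S then f a else a with hg
  have ginj : Function.Injective g := by
    intro a b hab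
    by_cases haS : a ∈ S <;> by_cases hbS : b ∈ S
    · simp only [hg, if_pos haS, if_pos hbS] at hab
      exact finj a haS b hbS hab
    · simp only [hg, if_pos haS, if_neg hbS] at hab
      exact absurd (hab ▸ hfS a haS) hbS
    · simp only [hg, if_neg haS, if_pos hbS] at hab
      exact absurd (hab.symm ▸ hfS b hbS) haS
    · simpa only [hg, if_neg haS, if_neg hbS] using hab
  have gbij : Function.Bijective g := Finite.injective_iff_bijective.mp ginj
  set e : Equiv.Perm (Fin P) := Equiv.ofBijective g gbij with he
  set τ : Equiv.Perm (Fin P) := e.trans σ with hτ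
  have hτa : ∀ a, τ a = σ (g a) := fun a => rfl
  have hlt : ∑ a, h (circDist (x a) (y (τ a))) <
      ∑ a, h (circDist (x a) (y (σ a))) := by
    have hcomp : ∑ a, h (circDist (x (g a)) (y (σ (g a)))) =
        ∑ a, h (circDist (x a) (y (σ a))) :=
      Equiv.sum_comp e (fun a => h (circDist (x a) (y (σ a))))
    rw [← hcomp]
    apply Finset.sum_lt_sum
    · intro a _
      rw [hτa]
      by_cases haS : a ∈ S
      · have hga : g a = f a := if_pos haS
        rw [hga]
        exact (hsm (circDist_nonneg_s10 _ _) (circDist_nonneg_s10 _ _) (key a)).le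
      · have hga : g a = a := if_neg haS
        rw [hga]
    · refine ⟨k, Finset.mem_univ k, ?_⟩
      rw [hτa]
      have hga : g k = f k := if_pos hkS
      rw [hga]
      exact hsm (circDist_nonneg_s10 _ _) (circDist_nonneg_s10 _ _) (key k)
  exact absurd (hopt τ) (not_le.mpr hlt)
end

section
/- (Exchange inequality on the line used in the monotone rearrangement proof) Let h : ℝ≥0 → ℝ be convex and increasing and let x_1 ≤ x_2 and y_1 ≤ y_2 be real numbers. Then h(|x_1 - y_1|) + h(|x_2 - y_2|) ≤ h(|x_1 - y_2|) + h(|x_2 - y_1|). -/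
lemma spread_convex (f : ℝ → ℝ) (hf : ConvexOn ℝ (Set.Ici 0) f)
    {a b c d : ℝ} (hc : 0 ≤ c) (hca : c ≤ a) (hcb : c ≤ b) (had : a ≤ d)
    (hsum : a + b = c + d) : f a + f b ≤ f c + f d := by
  rcases eq_or_lt_of_le (hca.trans had) with hcd | hcd
  · have ha : a = c := le_antisymm (hcd ▸ had) hca
    have hb : b = d := by linarith
    rw [ha, hb]
  · have hd : (0:ℝ) ≤ d := hc.trans hcd.le
    have hdc : d - c ≠ 0 := ne_of_gt (sub_pos.2 hcd)
    set t : ℝ := (d - a) / (d - c) with ht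
    have ht0 : 0 ≤ t := div_nonneg (by linarith) (by linarith)
    have ht1 : t ≤ 1 := by
      rw [ht, div_le_one (sub_pos.2 hcd)]; linarith
    have ha : t * c + (1 - t) * d = a := by
      rw [ht]; field_simp; ring
    have hb : (1 - t) * c + t * d = b := by
      rw [ht]; field_simp; linear_combination (c - d) * hsum
    have h1 := hf.2 (Set.mem_Ici.2 hc) (Set.mem_Ici.2 hd) ht0
      (by linarith : (0:ℝ) ≤ 1 - t) (by ring : t + (1 - t) = 1)
    have h2 := hf.2 (Set.mem_Ici.2 hc) (Set.mem_Ici.2 hd)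
      (by linarith : (0:ℝ) ≤ 1 - t) ht0 (by ring : 1 - t + t = 1)
    simp only [smul_eq_mul] at h1 h2
    rw [ha] at h1
    rw [hb] at h2
    nlinarith [h1, h2]

lemma majorize_convex (h : ℝ → ℝ)
    (hconv : ConvexOn ℝ (Set.Ici 0) h) (hmono : MonotoneOn h (Set.Ici 0))
    {a b c d : ℝ} (ha : 0 ≤ a) (hb : 0 ≤ b) (hc : 0 ≤ c) (hd : 0 ≤ d)
    (hab : a ≤ b) (hcd : c ≤ d)
    (hsum : a + b ≤ c + d) (hmax : b ≤ d) :
    h a + h b ≤ h c + h d := by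
  rcases le_or_gt 0 (a + b - d) with h0 | h0
  · have step : h a + h b ≤ h (a + b - d) + h d :=
      spread_convex h hconv h0 (by linarith) (by linarith) (by linarith) (by ring)
    have mono : h (a + b - d) ≤ h c :=
      hmono (Set.mem_Ici.2 h0) (Set.mem_Ici.2 hc) (by linarith)
    linarith
  · have step : h a + h b ≤ h 0 + h (a + b) :=
      spread_convex h hconv le_rfl ha hb (by linarith) (by ring)
    have m1 : h 0 ≤ h c := hmono (Set.mem_Ici.2 le_rfl) (Set.mem_Ici.2 hc) hc
    have m2 : h (a + b) ≤ h d :=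
      hmono (Set.mem_Ici.2 (by linarith)) (Set.mem_Ici.2 hd) (by linarith)
    linarith

lemma majorize_convex' (h : ℝ → ℝ)
    (hconv : ConvexOn ℝ (Set.Ici 0) h) (hmono : MonotoneOn h (Set.Ici 0))
    {a b c d : ℝ} (ha : 0 ≤ a) (hb : 0 ≤ b) (hc : 0 ≤ c) (hd : 0 ≤ d)
    (hsum : a + b ≤ c + d) (hma : a ≤ max c d) (hmb : b ≤ max c d) :
    h a + h b ≤ h c + h d := by
  rcases le_total a b with hab | hab <;> rcases le_total c d with hcd | hcd
  · exact majorize_convex h hconv hmono ha hb hc hd hab hcd hsum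
      (by rwa [max_eq_right hcd] at hmb)
  · have := majorize_convex h hconv hmono ha hb hd hc hab hcd (by linarith)
      (by rwa [max_eq_left hcd] at hmb)
    linarith
  · have := majorize_convex h hconv hmono hb ha hc hd hab hcd (by linarith)
      (by rwa [max_eq_right hcd] at hma)
    linarith
  · have := majorize_convex h hconv hmono hb ha hd hc hab hcd (by linarith)
      (by rwa [max_eq_left hcd] at hma)
    linarith

theorem exchange_inequality_convex (h : ℝ → ℝ)
    (hconv : ConvexOn ℝ (Set.Ici 0) h) (hmono : MonotoneOn h (Set.Ici 0))
    (x₁ x₂ y₁ y₂ : ℝ) (hx : x₁ ≤ x₂) (hy : y₁ ≤ y₂) :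
    h |x₁ - y₁| + h |x₂ - y₂| ≤ h |x₁ - y₂| + h |x₂ - y₁| := by
  have lc1 := le_abs_self (x₁ - y₂)
  have lc2 := neg_abs_le (x₁ - y₂)
  have ld1 := le_abs_self (x₂ - y₁)
  have ld2 := neg_abs_le (x₂ - y₁)
  apply majorize_convex' h hconv hmono (abs_nonneg _) (abs_nonneg _)
    (abs_nonneg _) (abs_nonneg _)
  · rcases abs_cases (x₁ - y₁) with ⟨e1, _⟩ | ⟨e1, _⟩ <;>
      rcases abs_cases (x₂ - y₂) with ⟨e2, _⟩ | ⟨e2, _⟩ <;> linarith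
  · rcases abs_cases (x₁ - y₁) with ⟨e1, _⟩ | ⟨e1, _⟩
    · exact le_max_of_le_right (by linarith)
    · exact le_max_of_le_left (by linarith)
  · rcases abs_cases (x₂ - y₂) with ⟨e2, _⟩ | ⟨e2, _⟩
    · exact le_max_of_le_right (by linarith)
    · exact le_max_of_le_left (by linarith)
end

section
/- Let F and G be the cumulative distribution functions of discrete probability distributions on the circle, extended to ℝ with F(y+1) = F(y)+1, and for x ∈ [0,1) define F_x(y) = F(x+y) − F(x). Then for any convex increasing h, ∫_0^1 h(|F_x^{-1}(t) − G_x^{-1}(t)|) dt = ∫_0^1 h(|F^{-1}(t) − (G + F(x) − G(x))^{-1}(t)|) dt. -/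
/-!
Translating the argument of `F` by `x` shifts its pseudo-inverse by `-x`, subtracting a
constant `c` from `F` shifts the argument of the pseudo-inverse by `c`, and the pseudo-inverse
of a lift of a degree-one circle map again satisfies `F⁻¹(t + 1) = F⁻¹(t) + 1`. Hence the left
integrand is the right integrand evaluated at `t + F x`, and the right integrand is `1`-periodic
in `t`, so both integrate to the same value over a period.
-/

open MeasureTheory

open Function

theorem csInf_preimage_add_right {α : Type*} [ConditionallyCompleteLattice α] [AddGroup α]
    [AddRightMono α] {S : Set α} (hne : S.Nonempty) (hbdd : BddBelow S) (x : α) :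
    sInf ((· + x) ⁻¹' S) = sInf S - x := by
  have := (OrderIso.addRight x).symm.map_csInf' hne hbdd
  rw [OrderIso.image_eq_preimage_symm, OrderIso.symm_symm] at this
  exact this.symm.trans (by simp [sub_eq_add_neg])

theorem Function.Periodic.intervalIntegral_comp_add_right {E : Type*} [NormedAddCommGroup E]
    [NormedSpace ℝ E] {φ : ℝ → E} {T : ℝ} (hφ : Periodic φ T) (a : ℝ) :
    ∫ t in (0 : ℝ)..T, φ (t + a) = ∫ t in (0 : ℝ)..T, φ t := by
  simpa [intervalIntegral.integral_comp_add_right, add_comm T a] using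
    hφ.intervalIntegral_add_eq a 0

theorem pseudoInv_add_const (F : ℝ → ℝ) (c t : ℝ) :
    pseudoInv (fun s => F s + c) t = pseudoInv F (t - c) := by
  simp only [pseudoInv, sub_lt_iff_lt_add]

theorem pseudoInv_sub_const (F : ℝ → ℝ) (c t : ℝ) :
    pseudoInv (fun s => F s - c) t = pseudoInv F (t + c) := by
  simp only [pseudoInv, lt_sub_iff_add_lt]

theorem pseudoInv_comp_const_add {F : ℝ → ℝ} {t : ℝ} (hne : {s | t < F s}.Nonempty)
    (hbdd : BddBelow {s | t < F s}) (x : ℝ) :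
    pseudoInv (fun s => F (x + s)) t = pseudoInv F t - x := by
  simp only [pseudoInv, add_comm x]
  exact csInf_preimage_add_right hne hbdd x

namespace CircleDeg1Lift

variable (f g : CircleDeg1Lift)

theorem nonempty_setOf_lt (t : ℝ) : {s | t < f s}.Nonempty :=
  ⟨(⌈t - f 0⌉ + 1 : ℤ), by
    rw [Set.mem_ofPred_eq, map_int_of_map_zero]
    push_cast
    linarith [Int.le_ceil (t - f 0)]⟩

theorem bddBelow_setOf_lt (t : ℝ) : BddBelow {s | t < f s} :=
  ⟨(⌊t - f 0⌋ : ℤ), fun s (hs : t < f s) => by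
    by_contra! hlt
    have := f.monotone hlt.le
    rw [map_int_of_map_zero] at this
    linarith [Int.floor_le (t - f 0)]⟩

theorem pseudoInv_comp_const_add (x t : ℝ) :
    pseudoInv (fun s => f (x + s)) t = pseudoInv f t - x :=
  _root_.pseudoInv_comp_const_add (f.nonempty_setOf_lt t) (f.bddBelow_setOf_lt t) x

theorem pseudoInv_add_one (t : ℝ) : pseudoInv f (t + 1) = pseudoInv f t + 1 := by
  have := f.pseudoInv_comp_const_add 1 (t + 1)
  have hshift : (fun s => f (1 + s)) = fun s => f s + 1 := funext fun s => by
    rw [add_comm, map_add_one]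
  rw [hshift, pseudoInv_add_const, add_sub_cancel_right] at this
  linarith

theorem periodic_pseudoInv_sub (c : ℝ) :
    Periodic (fun t => pseudoInv f t - pseudoInv g (t - c)) 1 := fun t => by
  simp only [add_sub_right_comm t 1 c, pseudoInv_add_one]
  ring

end CircleDeg1Lift

theorem cut_point_change_of_variable_general (F G : ℝ → ℝ)
    (hFmono : Monotone F) (hGmono : Monotone G)
    (hFper : ∀ y, F (y + 1) = F y + 1) (hGper : ∀ y, G (y + 1) = G y + 1)
    (x : ℝ)
    (h : ℝ → ℝ) :
    ∫ t in (0:ℝ)..1,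
        h |pseudoInv (fun s => F (x + s) - F x) t -
           pseudoInv (fun s => G (x + s) - G x) t| =
    ∫ t in (0:ℝ)..1,
        h |pseudoInv F t - pseudoInv (fun s => G s + (F x - G x)) t| := by
  obtain ⟨f, rfl⟩ : ∃ f : CircleDeg1Lift, ⇑f = F := ⟨⟨⟨F, hFmono⟩, hFper⟩, rfl⟩
  obtain ⟨g, rfl⟩ : ∃ g : CircleDeg1Lift, ⇑g = G := ⟨⟨⟨G, hGmono⟩, hGper⟩, rfl⟩
  set φ : ℝ → ℝ := fun t => h |pseudoInv f t - pseudoInv g (t - (f x - g x))|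
  have hφ : Periodic φ 1 := (f.periodic_pseudoInv_sub g (f x - g x)).comp (h ∘ abs)
  have hLHS : ∀ t, h |pseudoInv (fun s => f (x + s) - f x) t -
      pseudoInv (fun s => g (x + s) - g x) t| = φ (t + f x) := fun t => by
    rw [pseudoInv_sub_const, pseudoInv_sub_const, f.pseudoInv_comp_const_add,
      g.pseudoInv_comp_const_add, sub_sub_sub_cancel_right]
    simp only [φ, show t + f x - (f x - g x) = t + g x by ring]
  simp only [hLHS, hφ.intervalIntegral_comp_add_right, pseudoInv_add_const, φ]

theorem cut_point_change_of_variable (F G : ℝ → ℝ)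
    (hFmono : Monotone F) (hGmono : Monotone G)
    (hFper : ∀ y, F (y + 1) = F y + 1) (hGper : ∀ y, G (y + 1) = G y + 1)
    (x : ℝ) (hx : x ∈ Set.Ico (0:ℝ) 1)
    (h : ℝ → ℝ) (hconv : ConvexOn ℝ (Set.Ici 0) h)
    (hmono : MonotoneOn h (Set.Ici 0)) :
    ∫ t in (0:ℝ)..1,
        h |pseudoInv (fun s => F (x + s) - F x) t -
           pseudoInv (fun s => G (x + s) - G x) t| =
    ∫ t in (0:ℝ)..1,
        h |pseudoInv F t - pseudoInv (fun s => G s + (F x - G x)) t| :=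
  cut_point_change_of_variable_general F G hFmono hGmono hFper hGper x h
end
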